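/- arXiv:2207.00376 — 6 statements merged into one kernel-verified Lean document; each statement's English description precedes it below -/
import Mathlib

section
/- Let P be the transition matrix of a positive recurrent single-birth Markov chain on ℤ⁺ with stationary distribution π, and for each h in the class H of functions h:ℤ⁺→ℝ with |h(j)|≤1 for all j, let m_j(h) be defined by the single-birth recursion. Let X be a random variable supported on ℤ⁺ with finite mean, assume π has finite mean, and assume S_P := sup_{h∈H} sup_{l∈ℤ⁺} |m_l(h)| < ∞. Then d_TV(X,π) ≤ S_P · ∑_{j=0}^∞ | ℙ(X>j) − ∑_{k=j+1}^∞ ∑_{i=0}^∞ ℙ(X=i)·P_{i,k} |. -/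
open scoped BigOperators

/-- `P` is a (row-stochastic) transition matrix on `ℤ⁺ = ℕ`. -/
def IsTransMat (P : ℕ → ℕ → ℝ) : Prop :=
  (∀ i j, 0 ≤ P i j) ∧ ∀ i, HasSum (P i) 1

/-- `P` is the transition matrix of a single-birth chain:
`P i (i+1) > 0` and `P i j = 0` for `j > i + 1`. -/
def IsSingleBirth (P : ℕ → ℕ → ℝ) : Prop :=
  IsTransMat P ∧ (∀ i, 0 < P i (i + 1)) ∧ ∀ i j, i + 1 < j → P i j = 0

/-- `pim` is a stationary distribution for `P`. -/
def IsStationaryDistrib (P : ℕ → ℕ → ℝ) (pim : ℕ → ℝ) : Prop :=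
  (∀ j, 0 ≤ pim j) ∧ HasSum pim 1 ∧ ∀ j, ∑' i, pim i * P i j = pim j

/-- Tail probability `∑_{k > j} μ k` of a mass function `μ`. -/
noncomputable def tail (μ : ℕ → ℝ) (j : ℕ) : ℝ := ∑' k, if j < k then μ k else 0

/-- Total variation distance between two mass functions on `ℕ`:
`d_TV = ∑_j |μ j - ν j| = sup_{|h| ≤ 1} |𝔼 h(X) - 𝔼 h(Y)|`. -/
noncomputable def dTV (μ ν : ℕ → ℝ) : ℝ := ∑' j, |μ j - ν j|

/-- `m` is the sequence `m_j(h)` given by the single-birth recursion: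
`m_0(h) = ĥ(0)/P_{0,1}` and, for `j ≥ 1`,
`m_j(h) = (1/P_{j,j+1}) (ĥ(j) + ∑_{k=0}^{j-1} m_k(h) ∑_{l=0}^{k} P_{j,l})`,
where `ĥ(j) = h(j) - ∑_k h(k) π_k`. -/
def IsMSeq (P : ℕ → ℕ → ℝ) (pim : ℕ → ℝ) (h : ℕ → ℝ) (m : ℕ → ℝ) : Prop :=
  m 0 = (h 0 - ∑' k, h k * pim k) / P 0 1 ∧
  ∀ j, 1 ≤ j →
    m j = (1 / P j (j + 1)) *
      ((h j - ∑' k, h k * pim k) +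
        ∑ k ∈ Finset.range j, m k * ∑ l ∈ Finset.range (k + 1), P j l)

/-- The set of values `|m_l(h)|` over `h ∈ H` (i.e. `|h| ≤ 1`) and `l ∈ ℤ⁺`;
its supremum is `S_P`. -/
def MSet (P : ℕ → ℕ → ℝ) (pim : ℕ → ℝ) : Set ℝ :=
  {x | ∃ h m, (∀ j, |h j| ≤ 1) ∧ IsMSeq P pim h m ∧ ∃ l, x = |m l|}

/- ---------- auxiliary material ---------- -/

noncomputable def mseq (P : ℕ → ℕ → ℝ) (pim h : ℕ → ℝ) : ℕ → ℝ
  | j => (1 / P j (j + 1)) *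
      ((h j - ∑' k, h k * pim k) +
        ∑ k ∈ (Finset.range j).attach,
          mseq P pim h k.1 * ∑ l ∈ Finset.range (k.1 + 1), P j l)
  decreasing_by exact Finset.mem_range.mp k.2

lemma mseq_eq (P : ℕ → ℕ → ℝ) (pim h : ℕ → ℝ) (j : ℕ) :
    mseq P pim h j = (1 / P j (j + 1)) *
      ((h j - ∑' k, h k * pim k) +
        ∑ k ∈ Finset.range j, mseq P pim h k * ∑ l ∈ Finset.range (k + 1), P j l) := by
  rw [mseq, Finset.sum_attach (Finset.range j)
    (fun k => mseq P pim h k * ∑ l ∈ Finset.range (k + 1), P j l)]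

lemma isMSeq_mseq (P : ℕ → ℕ → ℝ) (pim h : ℕ → ℝ) :
    IsMSeq P pim h (mseq P pim h) := by
  constructor
  · rw [mseq_eq]
    simp [one_div, div_eq_inv_mul]
  · intro j _
    exact mseq_eq P pim h j

lemma summable_ite_tail {μ : ℕ → ℝ} (hs : Summable μ) (hn : ∀ k, 0 ≤ μ k) (j : ℕ) :
    Summable fun k => if j < k then μ k else 0 := by
  refine Summable.of_nonneg_of_le (fun k => ?_) (fun k => ?_) hs
  · split <;> simp [hn]
  · split <;> simp [hn]

lemma tail_eq {μ : ℕ → ℝ} (hs : Summable μ) (hn : ∀ k, 0 ≤ μ k) (j : ℕ) :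
    tail μ j = (∑' k, μ k) - ∑ k ∈ Finset.range (j + 1), μ k := by
  have h1 : ∀ k, μ k = (if j < k then μ k else 0) + (if j < k then 0 else μ k) := by
    intro k; split <;> simp
  have h2 : Summable fun k => if j < k then (0:ℝ) else μ k := by
    refine Summable.of_nonneg_of_le (fun k => ?_) (fun k => ?_) hs
    · split <;> simp [hn]
    · split <;> simp [hn]
  have h3 : (∑' k, μ k) = tail μ j + ∑' k, if j < k then (0:ℝ) else μ k := by
    rw [tail, ← Summable.tsum_add (summable_ite_tail hs hn j) h2]
    exact tsum_congr h1
  have h4 : (∑' k, if j < k then (0:ℝ) else μ k) = ∑ k ∈ Finset.range (j + 1), μ k := by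
    rw [tsum_eq_sum (s := Finset.range (j + 1))
      (fun k hk => if_pos (by simpa using Nat.lt_of_succ_le (Nat.succ_le_of_lt (by
        simpa [Nat.lt_succ_iff, not_lt] using (Finset.mem_range.not.mp hk)))))]
    refine Finset.sum_congr rfl fun k hk => ?_
    rw [if_neg (by simpa [Nat.lt_succ_iff, not_lt] using Finset.mem_range.mp hk)]
  rw [h3, h4]; ring

/-- **Theorem 1 (main bound).** For a positive recurrent single-birth chain with
transition matrix `P` and stationary distribution `π` (with finite mean), and a
random variable `X` on `ℤ⁺` with mass function `μ` and finite mean, assuming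
`S_P = sup_{h ∈ H} sup_l |m_l(h)| < ∞`,
`d_TV(X, π) ≤ S_P ∑_j |ℙ(X > j) - ∑_{k>j} ∑_i ℙ(X = i) P_{i,k}|`. -/
theorem stein_single_birth_main
    (P : ℕ → ℕ → ℝ) (pim : ℕ → ℝ)
    (hP : IsSingleBirth P) (hpim : IsStationaryDistrib P pim)
    (hpimMean : Summable fun k : ℕ => (k : ℝ) * pim k)
    (μ : ℕ → ℝ) (hμ0 : ∀ j, 0 ≤ μ j) (hμ1 : HasSum μ 1)
    (hμMean : Summable fun k : ℕ => (k : ℝ) * μ k)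
    (hSfin : BddAbove (MSet P pim)) :
    dTV μ pim ≤ sSup (MSet P pim) *
      ∑' j, |tail μ j - ∑' k, if j < k then (∑' i, μ i * P i k) else 0| := by
  obtain ⟨⟨hP0, hP1⟩, hPpos, hPsb⟩ := hP
  obtain ⟨hpi0, hpi1, -⟩ := hpim
  set S := sSup (MSet P pim) with hSdef
  set h : ℕ → ℝ := fun j => if μ j - pim j < 0 then -1 else 1 with hhdef
  have hh1 : ∀ j, |h j| ≤ 1 := by
    intro j; rw [hhdef]; dsimp only; split <;> simp
  set m := mseq P pim h with hmdef
  have hm : IsMSeq P pim h m := isMSeq_mseq P pim h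
  have hmS : ∀ l, |m l| ≤ S := fun l => le_csSup hSfin ⟨h, m, hh1, hm, l, rfl⟩
  have hS0 : 0 ≤ S := (abs_nonneg _).trans (hmS 0)
  set c := ∑' k, h k * pim k with hcdef
  -- basic facts about rows of P
  have hProw : ∀ j, Summable (P j) := fun j => (hP1 j).summable
  have htp0 : ∀ j k, 0 ≤ tail (P j) k := fun j k =>
    tsum_nonneg fun l => by split <;> simp [hP0]
  have htpeq : ∀ j k, tail (P j) k = 1 - ∑ l ∈ Finset.range (k + 1), P j l := by
    intro j k
    rw [tail_eq (hProw j) (hP0 j) k, (hP1 j).tsum_eq]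
  have htple : ∀ j k, tail (P j) k ≤ 1 := by
    intro j k
    rw [htpeq]
    have : (0:ℝ) ≤ ∑ l ∈ Finset.range (k + 1), P j l :=
      Finset.sum_nonneg fun l _ => hP0 j l
    linarith
  have htpz : ∀ j k, j < k → tail (P j) k = 0 := by
    intro j k hjk
    have hz : ∀ l, (if k < l then P j l else 0) = 0 := by
      intro l
      split
      · exact hPsb j l (by omega)
      · rfl
    simp only [tail, hz, tsum_zero]
  have htpself : ∀ j, tail (P j) j = P j (j + 1) := by
    intro j
    have h1 := htpeq j j
    have h2 := htpeq j (j + 1)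
    rw [htpz j (j + 1) (by omega), Finset.sum_range_succ] at h2
    linarith
  -- the recursion in product form
  have hrec : ∀ j, m j * P j (j + 1)
      = (h j - c) + ∑ k ∈ Finset.range j, m k * ∑ l ∈ Finset.range (k + 1), P j l := by
    intro j
    have hp : P j (j + 1) ≠ 0 := (hPpos j).ne'
    rcases Nat.eq_zero_or_pos j with hj | hj
    · subst hj
      rw [hm.1]
      simp only [Finset.range_zero, Finset.sum_empty, add_zero]
      exact div_mul_cancel₀ _ hp
    · rw [hm.2 j hj, one_div, inv_mul_eq_div]
      exact div_mul_cancel₀ _ hp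
  -- the key pointwise identity
  have hkey : ∀ j, h j - c
      = ∑ k ∈ Finset.range (j + 1), m k * (tail (P j) k - if k < j then 1 else 0) := by
    intro j
    rw [Finset.sum_range_succ, if_neg (lt_irrefl j), htpself j, sub_zero]
    have e1 : ∑ k ∈ Finset.range j, m k * (tail (P j) k - if k < j then 1 else 0)
        = -∑ k ∈ Finset.range j, m k * ∑ l ∈ Finset.range (k + 1), P j l := by
      rw [← Finset.sum_neg_distrib]
      refine Finset.sum_congr rfl fun k hk => ?_
      rw [if_pos (Finset.mem_range.mp hk), htpeq j k]
      ring
    rw [e1]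
    linarith [hrec j]
  have hsupp : ∀ j k, j < k → m k * (tail (P j) k - if k < j then 1 else 0) = 0 := by
    intro j k hjk
    rw [htpz j k hjk, if_neg (by omega)]
    ring
  -- summability bookkeeping
  have hμs : Summable μ := hμ1.summable
  have hμMean1 : Summable fun j : ℕ => ((j : ℝ) + 1) * μ j := by
    refine (hμMean.add hμs).congr fun j => ?_
    ring
  set F : ℕ × ℕ → ℝ :=
    fun p => μ p.1 * (m p.2 * (tail (P p.1) p.2 - if p.2 < p.1 then 1 else 0)) with hFdef
  have hFabs_le : ∀ p : ℕ × ℕ, |F p| ≤ (if p.2 < p.1 + 1 then S * μ p.1 else 0) := by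
    rintro ⟨j, k⟩
    by_cases hk : k < j + 1
    · rw [if_pos hk]
      have h1 : |tail (P j) k - if k < j then 1 else 0| ≤ 1 := by
        have h2 := htp0 j k
        have h3 := htple j k
        split <;> rw [abs_le] <;> constructor <;> linarith
      have h4 : |F (j, k)| = μ j * (|m k| * |tail (P j) k - if k < j then 1 else 0|) := by
        rw [hFdef]
        dsimp only
        rw [abs_mul, abs_mul, abs_of_nonneg (hμ0 j)]
      rw [h4]
      calc μ j * (|m k| * |tail (P j) k - if k < j then 1 else 0|)
          ≤ μ j * (S * 1) := by
            refine mul_le_mul_of_nonneg_left ?_ (hμ0 j)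
            exact mul_le_mul (hmS k) h1 (abs_nonneg _) hS0
        _ = S * μ j := by ring
    · rw [if_neg hk]
      have hz : F (j, k) = 0 := by
        rw [hFdef]
        dsimp only
        rw [hsupp j k (by omega)]
        ring
      simp [hz]
  have hDom : Summable fun p : ℕ × ℕ => (if p.2 < p.1 + 1 then S * μ p.1 else 0) := by
    rw [summable_prod_of_nonneg (f := fun p : ℕ × ℕ => (if p.2 < p.1 + 1 then S * μ p.1 else 0))
      (fun p => by simp only [Pi.zero_apply]; split; exacts [mul_nonneg hS0 (hμ0 _), le_refl 0])]
    constructor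
    · intro j
      exact summable_of_ne_finset_zero (s := Finset.range (j + 1))
        (fun k hk => if_neg (by have := Finset.mem_range.not.mp hk; omega))
    · have e : ∀ j : ℕ, (∑' k : ℕ, if k < j + 1 then S * μ j else 0)
          = S * (((j : ℝ) + 1) * μ j) := by
        intro j
        rw [tsum_eq_sum (s := Finset.range (j + 1))
          (fun k hk => if_neg (by have := Finset.mem_range.not.mp hk; omega))]
        rw [Finset.sum_congr rfl fun k hk => if_pos (Finset.mem_range.mp hk),
          Finset.sum_const, Finset.card_range, nsmul_eq_mul]
        push_cast
        ring
      refine (hμMean1.mul_left S).congr fun j => ?_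
      rw [e j]
  have hFsum : Summable F :=
    summable_abs_iff.mp (Summable.of_nonneg_of_le (fun p => abs_nonneg _) hFabs_le hDom)
  -- inner sums
  have hinner : ∀ j, ∑' k, F (j, k) = μ j * (h j - c) := by
    intro j
    rw [tsum_eq_sum (s := Finset.range (j + 1)) (fun k hk => by
      rw [hFdef]
      dsimp only
      rw [hsupp j k (by have := Finset.mem_range.not.mp hk; omega)]
      ring)]
    rw [hkey j, Finset.mul_sum]
  set g : ℕ → ℝ := fun k => ∑' j, μ j * tail (P j) k with hgdef
  have hsA : ∀ k, Summable fun j => μ j * tail (P j) k := by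
    intro k
    refine Summable.of_nonneg_of_le (fun j => mul_nonneg (hμ0 j) (htp0 j k)) (fun j => ?_) hμs
    calc μ j * tail (P j) k ≤ μ j * 1 := mul_le_mul_of_nonneg_left (htple j k) (hμ0 j)
      _ = μ j := mul_one _
  have hsB : ∀ k : ℕ, Summable fun j => if k < j then μ j else 0 := fun k =>
    summable_ite_tail hμs hμ0 k
  have hinner2 : ∀ k, ∑' j, F (j, k) = m k * (g k - tail μ k) := by
    intro k
    have e : ∀ j, F (j, k) = m k * (μ j * tail (P j) k - if k < j then μ j else 0) := by
      intro j
      rw [hFdef]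
      dsimp only
      by_cases hkj : k < j <;> simp only [if_pos, if_neg, hkj, if_true, if_false] <;> ring
    rw [tsum_congr e, tsum_mul_left, Summable.tsum_sub (hsA k) (hsB k)]
    rw [hgdef, tail]
  -- Fubini
  have hfub : ∑' j, μ j * (h j - c) = ∑' k, m k * (g k - tail μ k) := by
    rw [← tsum_congr hinner, ← tsum_congr hinner2]
    exact (Summable.tsum_comm (f := fun j k => F (j, k)) hFsum).symm
  -- LHS is the total variation distance
  have hμh : Summable fun j => μ j * h j := by
    refine summable_abs_iff.mp (Summable.of_nonneg_of_le (fun j => abs_nonneg _)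
      (fun j => ?_) hμs)
    rw [abs_mul, abs_of_nonneg (hμ0 j)]
    calc μ j * |h j| ≤ μ j * 1 := mul_le_mul_of_nonneg_left (hh1 j) (hμ0 j)
      _ = μ j := mul_one _
  have hπh : Summable fun j => h j * pim j := by
    refine summable_abs_iff.mp (Summable.of_nonneg_of_le (fun j => abs_nonneg _)
      (fun j => ?_) hpi1.summable)
    rw [abs_mul, abs_of_nonneg (hpi0 j)]
    calc |h j| * pim j ≤ 1 * pim j := mul_le_mul_of_nonneg_right (hh1 j) (hpi0 j)
      _ = pim j := one_mul _
  have hLHS : ∑' j, μ j * (h j - c) = dTV μ pim := by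
    have e1 : ∀ j, μ j * (h j - c) = μ j * h j - μ j * c := fun j => by ring
    rw [tsum_congr e1, Summable.tsum_sub hμh (hμs.mul_right c), tsum_mul_right, hμ1.tsum_eq, one_mul,
      hcdef, ← Summable.tsum_sub hμh hπh, dTV]
    refine tsum_congr fun j => ?_
    rw [hhdef]
    dsimp only
    by_cases hj : μ j - pim j < 0
    · rw [if_pos hj, abs_of_neg hj]
      ring
    · rw [if_neg hj, abs_of_nonneg (not_lt.mp hj)]
      ring
  -- summability of tail μ and of g
  have hTμ : Summable fun p : ℕ × ℕ => (if p.2 < p.1 then μ p.1 else 0) := by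
    rw [summable_prod_of_nonneg (f := fun p : ℕ × ℕ => (if p.2 < p.1 then μ p.1 else 0))
      (fun p => by simp only [Pi.zero_apply]; split <;> simp [hμ0])]
    refine ⟨fun j => summable_of_ne_finset_zero (s := Finset.range j)
      (fun k hk => if_neg (by have := Finset.mem_range.not.mp hk; omega)), ?_⟩
    have e : ∀ j : ℕ, (∑' k : ℕ, if k < j then μ j else 0) = (j : ℝ) * μ j := by
      intro j
      rw [tsum_eq_sum (s := Finset.range j)
        (fun k hk => if_neg (by have := Finset.mem_range.not.mp hk; omega))]
      rw [Finset.sum_congr rfl fun k hk => if_pos (Finset.mem_range.mp hk),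
        Finset.sum_const, Finset.card_range, nsmul_eq_mul]
    exact hμMean.congr fun j => (e j).symm
  have htailμ : Summable (tail μ) := by
    refine (hTμ.prod_symm).prod.congr fun k => ?_
    simp only [Prod.swap_prod_mk]
    rw [tail]
  have hW : Summable fun p : ℕ × ℕ => μ p.1 * tail (P p.1) p.2 := by
    rw [summable_prod_of_nonneg (f := fun p : ℕ × ℕ => μ p.1 * tail (P p.1) p.2)
      (fun p => by simp only [Pi.zero_apply]; exact mul_nonneg (hμ0 _) (htp0 _ _))]
    constructor
    · intro j
      exact summable_of_ne_finset_zero (s := Finset.range (j + 1)) (fun k hk => by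
        rw [htpz j k (by have := Finset.mem_range.not.mp hk; omega)]
        ring)
    · refine Summable.of_nonneg_of_le
        (fun j => tsum_nonneg fun k => mul_nonneg (hμ0 _) (htp0 _ _)) (fun j => ?_) hμMean1
      rw [tsum_eq_sum (s := Finset.range (j + 1)) (fun k hk => by
        rw [htpz j k (by have := Finset.mem_range.not.mp hk; omega)]
        ring)]
      calc ∑ k ∈ Finset.range (j + 1), μ j * tail (P j) k
          ≤ ∑ k ∈ Finset.range (j + 1), μ j := Finset.sum_le_sum fun k _ => by
            calc μ j * tail (P j) k ≤ μ j * 1 :=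
                mul_le_mul_of_nonneg_left (htple j k) (hμ0 j)
              _ = μ j := mul_one _
        _ = ((j : ℝ) + 1) * μ j := by
            rw [Finset.sum_const, Finset.card_range, nsmul_eq_mul]
            push_cast
            ring
  have hg : Summable g := by
    refine (hW.prod_symm).prod.congr fun k => ?_
    simp only [Prod.swap_prod_mk]
    rfl
  have habsum : Summable fun k => |tail μ k - g k| := (htailμ.sub hg).abs
  have hmg : Summable fun k => m k * (g k - tail μ k) := by
    refine summable_abs_iff.mp (Summable.of_nonneg_of_le (fun k => abs_nonneg _)
      (fun k => ?_) (habsum.mul_left S))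
    rw [abs_mul, abs_sub_comm]
    exact mul_le_mul_of_nonneg_right (hmS k) (abs_nonneg _)
  have hbound : ∑' k, m k * (g k - tail μ k) ≤ S * ∑' k, |tail μ k - g k| := by
    rw [← tsum_mul_left]
    refine Summable.tsum_le_tsum (fun k => ?_) hmg (habsum.mul_left S)
    calc m k * (g k - tail μ k) ≤ |m k * (g k - tail μ k)| := le_abs_self _
      _ = |m k| * |tail μ k - g k| := by rw [abs_mul, abs_sub_comm]
      _ ≤ S * |tail μ k - g k| := mul_le_mul_of_nonneg_right (hmS k) (abs_nonneg _)
  -- identify g with the statement's expression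
  have hgeq : ∀ j, g j = ∑' k, if j < k then (∑' i, μ i * P i k) else 0 := by
    intro j
    have e : ∀ i, μ i * tail (P i) j = ∑' k, if j < k then μ i * P i k else 0 := by
      intro i
      rw [tail, ← tsum_mul_left]
      exact tsum_congr fun k => by split <;> simp
    have hV : Summable fun p : ℕ × ℕ => (if j < p.2 then μ p.1 * P p.1 p.2 else 0) := by
      rw [summable_prod_of_nonneg (f := fun p : ℕ × ℕ => (if j < p.2 then μ p.1 * P p.1 p.2 else 0))
        (fun p => by simp only [Pi.zero_apply]; split; exacts [mul_nonneg (hμ0 _) (hP0 _ _), le_refl 0])]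
      constructor
      · intro i
        refine Summable.of_nonneg_of_le (fun k => ?_) (fun k => ?_) ((hProw i).mul_left (μ i))
        · split
          · exact mul_nonneg (hμ0 _) (hP0 _ _)
          · exact le_refl 0
        · split
          · exact le_refl _
          · exact mul_nonneg (hμ0 _) (hP0 _ _)
      · refine (hsA j).congr fun i => (e i)
    have comm := Summable.tsum_comm (f := fun i k => if j < k then μ i * P i k else 0) hV
    rw [hgdef]
    dsimp only
    rw [tsum_congr e, ← comm]
    refine tsum_congr fun k => ?_
    by_cases hjk : j < k <;> simp [hjk]
  calc dTV μ pim = ∑' k, m k * (g k - tail μ k) := by rw [← hLHS, hfub]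
    _ ≤ S * ∑' k, |tail μ k - g k| := hbound
    _ = S * ∑' j, |tail μ j - ∑' k, if j < k then (∑' i, μ i * P i k) else 0| := by
        rw [tsum_congr fun k => by rw [hgeq k]]
end

section
/- Let P be the transition matrix of a single-birth Markov chain on ℤ⁺ with stationary distribution π having finite mean, let h:ℤ⁺→ℝ be bounded, and let f:ℤ⁺→ℝ satisfy f(0)=0, sup_j |f(j+1)−f(j)|<∞, and Poisson's equation h(i)−∑_k h(k)π_k = f(i)−∑_{j=0}^∞ P_{i,j} f(j) for every i∈ℤ⁺. Then for any ℤ⁺-valued random variable X with finite mean, 𝔼h(X) − ∑_k h(k)π_k = ∑_{j=0}^∞ (f(j+1)−f(j)) · [ ℙ(X>j) − ∑_{k=j+1}^∞ ∑_{i=0}^∞ ℙ(X=i)·P_{i,k} ]. -/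
open scoped BigOperators

/-- `pim` is a stationary distribution for `P`. -/
def IsStationaryDist (P : ℕ → ℕ → ℝ) (pim : ℕ → ℝ) : Prop :=
  (∀ j, 0 ≤ pim j) ∧ HasSum pim 1 ∧ ∀ j, ∑' i, pim i * P i j = pim j

lemma ite_nn {w : ℕ → ℝ} (hw0 : ∀ k, 0 ≤ w k) :
    0 ≤ fun p : ℕ × ℕ => if p.1 < p.2 then w p.2 else 0 := by
  intro p
  simp only [Pi.zero_apply]
  split <;> simp [hw0]

lemma absf_le {f : ℕ → ℝ} (hf0 : f 0 = 0) {C : ℝ} (hC : ∀ j, |f (j + 1) - f j| ≤ C) (l : ℕ) :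
    |f l| ≤ C * l := by
  have hfl : f l = ∑ i ∈ Finset.range l, (f (i + 1) - f i) := by
    rw [Finset.sum_range_sub, hf0, sub_zero]
  rw [hfl]
  calc |∑ i ∈ Finset.range l, (f (i + 1) - f i)| ≤ ∑ i ∈ Finset.range l, |f (i + 1) - f i| :=
        Finset.abs_sum_le_sum_abs _ _
    _ ≤ ∑ _i ∈ Finset.range l, C := Finset.sum_le_sum fun i _ => hC i
    _ = C * l := by simp [mul_comm]

lemma iteSummable {w : ℕ → ℝ} (hw0 : ∀ k, 0 ≤ w k)
    (hwm : Summable fun k : ℕ => (k : ℝ) * w k) :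
    Summable (fun p : ℕ × ℕ => if p.1 < p.2 then w p.2 else 0) := by
  have key : Summable (fun q : ℕ × ℕ => if q.2 < q.1 then w q.1 else 0) := by
    apply (summable_prod_of_nonneg ?_).2
    constructor
    · intro j
      apply summable_of_ne_finset_zero (s := Finset.range j)
      intro l hl
      simp only [Finset.mem_range, not_lt] at hl
      simp [not_lt.2 hl]
    · have he : ∀ j : ℕ, ∑' l : ℕ, (if l < j then w j else 0) = (j : ℝ) * w j := by
        intro j
        rw [tsum_eq_sum (s := Finset.range j) (by
          intro l hl
          simp only [Finset.mem_range, not_lt] at hl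
          simp [not_lt.2 hl])]
        rw [Finset.sum_congr rfl (fun l hl => if_pos (Finset.mem_range.1 hl)),
          Finset.sum_const, Finset.card_range, nsmul_eq_mul]
      simpa [he] using hwm
    · intro p
      simp only [Pi.zero_apply]
      split <;> simp [hw0]
  exact key.prod_symm

lemma tail_summable {w : ℕ → ℝ} (hw0 : ∀ k, 0 ≤ w k)
    (hwm : Summable fun k : ℕ => (k : ℝ) * w k) : Summable (tail w) :=
  ((summable_prod_of_nonneg (ite_nn hw0)).1 (iteSummable hw0 hwm)).2

lemma tail_nonneg {w : ℕ → ℝ} (hw0 : ∀ k, 0 ≤ w k) (j : ℕ) : 0 ≤ tail w j :=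
  tsum_nonneg fun k => by split <;> simp [hw0]

lemma abel_identity (f : ℕ → ℝ) (hf0 : f 0 = 0) {C : ℝ} (hC : ∀ j, |f (j + 1) - f j| ≤ C)
    (w : ℕ → ℝ) (hw0 : ∀ k, 0 ≤ w k)
    (hwm : Summable fun k : ℕ => (k : ℝ) * w k) :
    ∑' j, f j * w j = ∑' l, (f (l + 1) - f l) * tail w l := by
  set g : ℕ → ℕ → ℝ := fun l j => (f (l + 1) - f l) * (if l < j then w j else 0) with hg
  have hgsum : Summable (Function.uncurry g) := by
    apply Summable.of_norm
    apply Summable.of_nonneg_of_le (fun p => norm_nonneg _) ?_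
      ((iteSummable hw0 hwm).mul_left C)
    rintro ⟨l, j⟩
    have h1 : (0:ℝ) ≤ (if l < j then w j else 0) := by split <;> simp [hw0]
    show ‖g l j‖ ≤ C * (if l < j then w j else 0)
    calc ‖g l j‖ = |f (l + 1) - f l| * (if l < j then w j else 0) := by
          rw [hg]
          dsimp only
          rw [norm_mul, Real.norm_eq_abs, Real.norm_eq_abs, abs_of_nonneg h1]
      _ ≤ C * (if l < j then w j else 0) := mul_le_mul_of_nonneg_right (hC l) h1
  calc ∑' j, f j * w j = ∑' j, ∑' l, g l j := by
        refine tsum_congr fun j => ?_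
        rw [tsum_eq_sum (s := Finset.range j) (by
          intro l hl
          simp only [Finset.mem_range, not_lt] at hl
          simp [hg, not_lt.2 hl])]
        rw [Finset.sum_congr rfl (fun l hl => by
          simp only [Finset.mem_range] at hl
          show g l j = (f (l + 1) - f l) * w j
          simp [hg, hl]), ← Finset.sum_mul, Finset.sum_range_sub, hf0, sub_zero]
    _ = ∑' l, ∑' j, g l j := Summable.tsum_comm hgsum
    _ = ∑' l, (f (l + 1) - f l) * tail w l := tsum_congr fun l => tsum_mul_left

/-- **Poisson-equation identity.** If `f` solves Poisson's equation
`h(i) - 𝔼 h(π) = f(i) - ∑_j P_{i,j} f(j)` with `f(0) = 0` and bounded increments,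
then for any `ℤ⁺`-valued `X` with finite mean,
`𝔼 h(X) - 𝔼 h(π) = ∑_j Δf(j) [ℙ(X > j) - ∑_{k>j} ∑_i ℙ(X = i) P_{i,k}]`. -/
theorem poisson_equation_identity
    (P : ℕ → ℕ → ℝ) (pim : ℕ → ℝ)
    (hP : IsSingleBirth P) (hpim : IsStationaryDist P pim)
    (hpimMean : Summable fun k : ℕ => (k : ℝ) * pim k)
    (h : ℕ → ℝ) (hhbd : ∃ C, ∀ j, |h j| ≤ C)
    (f : ℕ → ℝ) (hf0 : f 0 = 0) (hfinc : ∃ C, ∀ j, |f (j + 1) - f j| ≤ C)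
    (hPoisson : ∀ i, h i - ∑' k, h k * pim k = f i - ∑' j, P i j * f j)
    (μ : ℕ → ℝ) (hμ0 : ∀ j, 0 ≤ μ j) (hμ1 : HasSum μ 1)
    (hμMean : Summable fun k : ℕ => (k : ℝ) * μ k) :
    (∑' j, h j * μ j) - (∑' k, h k * pim k) =
      ∑' j, (f (j + 1) - f j) *
        (tail μ j - ∑' k, if j < k then (∑' i, μ i * P i k) else 0) := by
  obtain ⟨Ch, hCh⟩ := hhbd
  obtain ⟨C, hC⟩ := hfinc
  have hC0 : 0 ≤ C := le_trans (abs_nonneg _) (hC 0)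
  have hP0 : ∀ i j, 0 ≤ P i j := hP.1.1
  have hProw : ∀ i, HasSum (P i) 1 := hP.1.2
  have hPz : ∀ i j, i + 1 < j → P i j = 0 := hP.2.2
  have hμs : Summable μ := hμ1.summable
  set c : ℝ := ∑' k, h k * pim k with hcdef
  set ν : ℕ → ℝ := fun k => ∑' i, μ i * P i k with hνdef
  show (∑' j, h j * μ j) - c = ∑' j, (f (j + 1) - f j) * (tail μ j - tail ν j)
  -- basic facts about ν
  have hν0 : ∀ k, 0 ≤ ν k := fun k => tsum_nonneg fun i => mul_nonneg (hμ0 i) (hP0 i k)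
  have hGm : Summable (fun p : ℕ × ℕ => μ p.1 * P p.1 p.2 * p.2) := by
    apply (summable_prod_of_nonneg ?_).2
    constructor
    · intro i
      apply summable_of_ne_finset_zero (s := Finset.range (i + 2))
      intro l hl
      simp only [Finset.mem_range, not_lt] at hl
      rw [hPz i l (by omega), mul_zero, zero_mul]
    · apply Summable.of_nonneg_of_le
        (fun i => tsum_nonneg fun k => mul_nonneg (mul_nonneg (hμ0 i) (hP0 i k)) (Nat.cast_nonneg k))
        ?_ ((hμMean.add hμs).congr (fun i => rfl))
      intro i
      have hts : ∑' k : ℕ, μ i * P i k * k = ∑ k ∈ Finset.range (i + 2), μ i * P i k * k := by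
        apply tsum_eq_sum
        intro l hl
        simp only [Finset.mem_range, not_lt] at hl
        rw [hPz i l (by omega), mul_zero, zero_mul]
      rw [hts]
      calc ∑ k ∈ Finset.range (i + 2), μ i * P i k * k
          ≤ ∑ k ∈ Finset.range (i + 2), P i k * (μ i * ((i : ℝ) + 1)) := by
            refine Finset.sum_le_sum fun k hk => ?_
            simp only [Finset.mem_range] at hk
            have hk1 : (k : ℝ) ≤ (i : ℝ) + 1 := by
              have : (k : ℝ) ≤ ((i + 1 : ℕ) : ℝ) := Nat.cast_le.2 (by omega)
              simpa using this
            have := mul_le_mul_of_nonneg_left hk1 (mul_nonneg (hμ0 i) (hP0 i k))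
            calc μ i * P i k * (k : ℝ) ≤ μ i * P i k * ((i : ℝ) + 1) := this
              _ = P i k * (μ i * ((i : ℝ) + 1)) := by ring
        _ = (∑ k ∈ Finset.range (i + 2), P i k) * (μ i * ((i : ℝ) + 1)) :=
            (Finset.sum_mul _ _ _).symm
        _ ≤ 1 * (μ i * ((i : ℝ) + 1)) := by
            refine mul_le_mul_of_nonneg_right ?_
              (mul_nonneg (hμ0 i) (by positivity))
            exact sum_le_hasSum _ (fun k _ => hP0 i k) (hProw i)
        _ = (fun i : ℕ => (i : ℝ) * μ i + μ i) i := by push_cast; ring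
    · intro p
      simp only [Pi.zero_apply]
      exact mul_nonneg (mul_nonneg (hμ0 _) (hP0 _ _)) (Nat.cast_nonneg _)
  have hνm : Summable (fun k : ℕ => (k : ℝ) * ν k) := by
    have hsw := hGm.prod_symm
    have hmarg := ((summable_prod_of_nonneg (by
      intro p
      simp only [Pi.zero_apply]
      exact mul_nonneg (mul_nonneg (hμ0 _) (hP0 _ _)) (Nat.cast_nonneg _))).1 hsw).2
    have he : ∀ k : ℕ, ∑' i : ℕ, μ i * P i k * (k : ℝ) = (k : ℝ) * ν k := by
      intro k
      rw [tsum_mul_right, mul_comm]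
    exact hmarg.congr he
  -- pointwise bounds
  have hfb : ∀ l : ℕ, |f l| ≤ C * l := absf_le hf0 hC
  have hSb : ∀ i : ℕ, |∑' l, P i l * f l| ≤ C * ((i : ℝ) + 1) := by
    intro i
    have hts : ∑' l : ℕ, P i l * f l = ∑ l ∈ Finset.range (i + 2), P i l * f l := by
      apply tsum_eq_sum
      intro l hl
      simp only [Finset.mem_range, not_lt] at hl
      rw [hPz i l (by omega), zero_mul]
    rw [hts]
    calc |∑ l ∈ Finset.range (i + 2), P i l * f l|
        ≤ ∑ l ∈ Finset.range (i + 2), |P i l * f l| := Finset.abs_sum_le_sum_abs _ _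
      _ ≤ ∑ l ∈ Finset.range (i + 2), P i l * (C * ((i : ℝ) + 1)) := by
          refine Finset.sum_le_sum fun l hl => ?_
          simp only [Finset.mem_range] at hl
          rw [abs_mul, abs_of_nonneg (hP0 i l)]
          refine mul_le_mul_of_nonneg_left ?_ (hP0 i l)
          refine le_trans (hfb l) ?_
          refine mul_le_mul_of_nonneg_left ?_ hC0
          have : (l : ℝ) ≤ ((i + 1 : ℕ) : ℝ) := Nat.cast_le.2 (by omega)
          simpa using this
      _ = (∑ l ∈ Finset.range (i + 2), P i l) * (C * ((i : ℝ) + 1)) :=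
          (Finset.sum_mul _ _ _).symm
      _ ≤ 1 * (C * ((i : ℝ) + 1)) := by
          refine mul_le_mul_of_nonneg_right
            (sum_le_hasSum _ (fun k _ => hP0 i k) (hProw i)) (by positivity)
      _ = C * ((i : ℝ) + 1) := one_mul _
  -- summability of the various series
  have hS1 : Summable (fun j => h j * μ j) := by
    apply Summable.of_norm
    apply Summable.of_nonneg_of_le (fun j => norm_nonneg _) ?_ (hμs.mul_left Ch)
    intro j
    rw [Real.norm_eq_abs, abs_mul, abs_of_nonneg (hμ0 j)]
    exact mul_le_mul_of_nonneg_right (hCh j) (hμ0 j)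
  have hS2 : Summable (fun j => f j * μ j) := by
    apply Summable.of_norm
    apply Summable.of_nonneg_of_le (fun j => norm_nonneg _) ?_ (hμMean.mul_left C)
    intro j
    rw [Real.norm_eq_abs, abs_mul, abs_of_nonneg (hμ0 j)]
    calc |f j| * μ j ≤ C * (j : ℝ) * μ j := mul_le_mul_of_nonneg_right (hfb j) (hμ0 j)
      _ = C * ((j : ℝ) * μ j) := by ring
  have hS3 : Summable (fun j => (∑' l, P j l * f l) * μ j) := by
    apply Summable.of_norm
    apply Summable.of_nonneg_of_le (fun j => norm_nonneg _) ?_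
      ((hμMean.mul_left C).add (hμs.mul_left C))
    intro j
    rw [Real.norm_eq_abs, abs_mul, abs_of_nonneg (hμ0 j)]
    calc |∑' l, P j l * f l| * μ j ≤ C * ((j : ℝ) + 1) * μ j :=
          mul_le_mul_of_nonneg_right (hSb j) (hμ0 j)
      _ = C * ((j : ℝ) * μ j) + C * μ j := by ring
  -- Fubini : ∑' i, μ i * (∑' l, P i l * f l) = ∑' l, ν l * f l
  have hFs : Summable (Function.uncurry (fun i l => μ i * (P i l * f l))) := by
    apply Summable.of_norm
    apply Summable.of_nonneg_of_le (fun p => norm_nonneg _) ?_ (hGm.mul_left C)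
    rintro ⟨i, l⟩
    show ‖μ i * (P i l * f l)‖ ≤ C * (μ i * P i l * l)
    rw [Real.norm_eq_abs, abs_mul, abs_mul, abs_of_nonneg (hμ0 i), abs_of_nonneg (hP0 i l)]
    calc μ i * (P i l * |f l|) ≤ μ i * (P i l * (C * l)) := by
          refine mul_le_mul_of_nonneg_left
            (mul_le_mul_of_nonneg_left (hfb l) (hP0 i l)) (hμ0 i)
      _ = C * (μ i * P i l * l) := by ring
  have hFub : ∑' i, μ i * (∑' l, P i l * f l) = ∑' l, ν l * f l := by
    calc ∑' i, μ i * (∑' l, P i l * f l) = ∑' i, ∑' l, μ i * (P i l * f l) :=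
          tsum_congr fun i => tsum_mul_left.symm
      _ = ∑' l, ∑' i, μ i * (P i l * f l) := (Summable.tsum_comm hFs).symm
      _ = ∑' l, ν l * f l := by
          refine tsum_congr fun l => ?_
          rw [show (fun i => μ i * (P i l * f l)) = fun i => (μ i * P i l) * f l from
            funext fun i => (mul_assoc _ _ _).symm, tsum_mul_right]
  -- the tails series are summable
  have hTμ : Summable (fun j => (f (j + 1) - f j) * tail μ j) := by
    apply Summable.of_norm
    apply Summable.of_nonneg_of_le (fun j => norm_nonneg _) ?_
      ((tail_summable hμ0 hμMean).mul_left C)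
    intro j
    rw [Real.norm_eq_abs, abs_mul, abs_of_nonneg (tail_nonneg hμ0 j)]
    exact mul_le_mul_of_nonneg_right (hC j) (tail_nonneg hμ0 j)
  have hTν : Summable (fun j => (f (j + 1) - f j) * tail ν j) := by
    apply Summable.of_norm
    apply Summable.of_nonneg_of_le (fun j => norm_nonneg _) ?_
      ((tail_summable hν0 hνm).mul_left C)
    intro j
    rw [Real.norm_eq_abs, abs_mul, abs_of_nonneg (tail_nonneg hν0 j)]
    exact mul_le_mul_of_nonneg_right (hC j) (tail_nonneg hν0 j)
  -- main computation
  have step1 : (∑' j, h j * μ j) - c = ∑' j, (h j - c) * μ j := by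
    have : ∑' j, (h j - c) * μ j = ∑' j, (h j * μ j - c * μ j) :=
      tsum_congr fun j => sub_mul _ _ _
    rw [this, Summable.tsum_sub hS1 (hμs.mul_left c), tsum_mul_left, hμ1.tsum_eq, mul_one]
  have step2 : ∑' j, (h j - c) * μ j = ∑' j, (f j - ∑' l, P j l * f l) * μ j :=
    tsum_congr fun j => by rw [hPoisson j]
  have step3 : ∑' j, (f j - ∑' l, P j l * f l) * μ j
      = (∑' j, f j * μ j) - ∑' j, (∑' l, P j l * f l) * μ j := by
    have : ∑' j, (f j - ∑' l, P j l * f l) * μ j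
        = ∑' j, (f j * μ j - (∑' l, P j l * f l) * μ j) :=
      tsum_congr fun j => sub_mul _ _ _
    rw [this, Summable.tsum_sub hS2 hS3]
  have step4 : ∑' j, f j * μ j = ∑' l, (f (l + 1) - f l) * tail μ l :=
    abel_identity f hf0 hC μ hμ0 hμMean
  have step5 : ∑' j, (∑' l, P j l * f l) * μ j = ∑' l, (f (l + 1) - f l) * tail ν l := by
    calc ∑' j, (∑' l, P j l * f l) * μ j = ∑' j, μ j * (∑' l, P j l * f l) :=
          tsum_congr fun j => mul_comm _ _
      _ = ∑' l, ν l * f l := hFub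
      _ = ∑' l, f l * ν l := tsum_congr fun l => mul_comm _ _
      _ = ∑' l, (f (l + 1) - f l) * tail ν l := abel_identity f hf0 hC ν hν0 hνm
  have stepR : ∑' j, (f (j + 1) - f j) * (tail μ j - tail ν j)
      = (∑' j, (f (j + 1) - f j) * tail μ j) - ∑' j, (f (j + 1) - f j) * tail ν j := by
    have : ∑' j, (f (j + 1) - f j) * (tail μ j - tail ν j)
        = ∑' j, ((f (j + 1) - f j) * tail μ j - (f (j + 1) - f j) * tail ν j) :=
      tsum_congr fun j => mul_sub _ _ _
    rw [this, Summable.tsum_sub hTμ hTν]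
  rw [step1, step2, step3, step4, step5, stepR]
end

section
/- Let P be the transition matrix of a positive recurrent birth–death chain on ℤ⁺ (so P_{i,j}=0 whenever |i−j|>1), with b_j=P_{j,j+1}>0 for all j, and stationary distribution π with π_j>0 for all j. Let h:ℤ⁺→ℝ be bounded, set ĥ(k)=h(k)−∑_l h(l)π_l, and let m_j(h) be defined by the single-birth recursion. Then for every j∈ℤ⁺, m_j(h) = (1/(b_j π_j)) ∑_{k=0}^{j} ĥ(k) π_k = −(1/(b_j π_j)) ∑_{k=j+1}^{∞} ĥ(k) π_k. -/
open scoped BigOperators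

/-- `pim` is a stationary distribution for `P`. -/
def IsStationaryMC (P : ℕ → ℕ → ℝ) (pim : ℕ → ℝ) : Prop :=
  (∀ j, 0 ≤ pim j) ∧ HasSum pim 1 ∧ ∀ j, ∑' i, pim i * P i j = pim j

/-- **Birth–death formula for `m_j(h)`.** For a positive recurrent birth–death
chain with `b_j = P_{j,j+1} > 0` and stationary distribution `π` with `π_j > 0`,
`m_j(h) = (1/(b_j π_j)) ∑_{k=0}^{j} ĥ(k) π_k = -(1/(b_j π_j)) ∑_{k>j} ĥ(k) π_k`. -/
theorem birth_death_m_formula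
    (P : ℕ → ℕ → ℝ) (pim : ℕ → ℝ)
    (hP : IsSingleBirth P)
    (hbd : ∀ i j : ℕ, j + 1 < i → P i j = 0)
    (hpim : IsStationaryMC P pim) (hpimpos : ∀ j, 0 < pim j)
    (h : ℕ → ℝ) (hhbd : ∃ C, ∀ j, |h j| ≤ C)
    (m : ℕ → ℝ) (hm : IsMSeq P pim h m) :
    ∀ j : ℕ,
      m j = (1 / (P j (j + 1) * pim j)) *
          ∑ k ∈ Finset.range (j + 1), (h k - ∑' l, h l * pim l) * pim k ∧
      m j = -(1 / (P j (j + 1) * pim j)) *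
          ∑' k, if j < k then (h k - ∑' l, h l * pim l) * pim k else 0 := by
  obtain ⟨⟨hPnn, hProw⟩, hb, hsb⟩ := hP
  obtain ⟨hπnn, hπsum, hπstat⟩ := hpim
  obtain ⟨C, hC⟩ := hhbd
  set H := ∑' k, h k * pim k with hH
  -- summability of h * pim
  have hsum1 : Summable (fun k => h k * pim k) := by
    apply Summable.of_norm_bounded (g := fun k => C * pim k) (hπsum.summable.mul_left C)
    intro k
    rw [Real.norm_eq_abs, abs_mul, abs_of_nonneg (hπnn k)]
    exact mul_le_mul_of_nonneg_right (hC k) (hπnn k)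
  have hf0 : HasSum (fun k => (h k - H) * pim k) 0 := by
    have h1 : HasSum (fun k => h k * pim k) H := hsum1.hasSum
    have h2 : HasSum (fun k => H * pim k) (H * 1) := hπsum.mul_left H
    have h3 := h1.sub h2
    have : (fun k => h k * pim k - H * pim k) = fun k => (h k - H) * pim k := by
      funext k; ring
    rw [this] at h3
    simpa using h3
  -- row sums
  have hrow0 : P 0 0 + P 0 1 = 1 := by
    have := (hProw 0).tsum_eq
    rw [tsum_eq_sum (s := Finset.range 2)
      (fun j hj => hsb 0 j (by simp [Finset.mem_range] at hj; omega))] at this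
    simp [Finset.sum_range_succ] at this
    linarith
  have hrow3 : ∀ j, P (j+1) j + P (j+1) (j+1) + P (j+1) (j+2) = 1 := by
    intro j
    have := (hProw (j+1)).tsum_eq
    rw [tsum_eq_sum (s := ({j, j+1, j+2} : Finset ℕ))] at this
    · rw [show ({j, j+1, j+2} : Finset ℕ) = insert j (insert (j+1) {j+2}) from rfl,
        Finset.sum_insert (by simp), Finset.sum_insert (by simp),
        Finset.sum_singleton] at this
      linarith
    · intro l hl
      simp [Finset.mem_insert] at hl
      rcases (show l + 1 < j + 1 ∨ (j+1) + 1 < l by omega) with h' | h'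
      · exact hbd (j+1) l (by omega)
      · exact hsb (j+1) l h'
  -- stationary equations, finite form
  have hstat0 : pim 0 * P 0 0 + pim 1 * P 1 0 = pim 0 := by
    have := hπstat 0
    rw [tsum_eq_sum (s := Finset.range 2)] at this
    · simpa [Finset.sum_range_succ] using this
    · intro i hi
      simp [Finset.mem_range] at hi
      rw [hbd i 0 (by omega), mul_zero]
  have hstat3 : ∀ j, pim j * P j (j+1) + pim (j+1) * P (j+1) (j+1)
      + pim (j+2) * P (j+2) (j+1) = pim (j+1) := by
    intro j
    have := hπstat (j+1)
    rw [tsum_eq_sum (s := ({j, j+1, j+2} : Finset ℕ))] at this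
    · rw [show ({j, j+1, j+2} : Finset ℕ) = insert j (insert (j+1) {j+2}) from rfl,
        Finset.sum_insert (by simp), Finset.sum_insert (by simp),
        Finset.sum_singleton] at this
      linarith
    · intro i hi
      simp [Finset.mem_insert] at hi
      rcases (show i + 1 < j + 1 ∨ (j+1) + 1 < i by omega) with h' | h'
      · rw [hsb i (j+1) (by omega), mul_zero]
      · rw [hbd i (j+1) h', mul_zero]
  -- detailed balance
  have hdb : ∀ j, pim j * P j (j+1) = pim (j+1) * P (j+1) j := by
    intro j
    induction j with
    | zero =>
      have h1 : pim 0 * (P 0 0 + P 0 1) = pim 0 * 1 := by rw [hrow0]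
      have h1' : pim 0 * P 0 0 + pim 0 * P 0 1 = pim 0 := by ring_nf; ring_nf at h1; linarith
      linarith [hstat0]
    | succ j ih =>
      have h1 : pim (j+1) * P (j+1) j + pim (j+1) * P (j+1) (j+1)
          + pim (j+1) * P (j+1) (j+2) = pim (j+1) := by
        linear_combination pim (j+1) * hrow3 j
      have h2 := hstat3 j
      linarith
  -- reduction of the inner double sum
  have hinner : ∀ j, ∑ k ∈ Finset.range (j+1), m k * ∑ l ∈ Finset.range (k+1), P (j+1) l
      = m j * P (j+1) j := by
    intro j
    rw [Finset.sum_range_succ]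
    have h1 : ∑ k ∈ Finset.range j, m k * ∑ l ∈ Finset.range (k+1), P (j+1) l = 0 := by
      apply Finset.sum_eq_zero; intro k hk
      have hz : ∑ l ∈ Finset.range (k+1), P (j+1) l = 0 := by
        apply Finset.sum_eq_zero; intro l hl
        simp [Finset.mem_range] at hk hl
        exact hbd (j+1) l (by omega)
      rw [hz, mul_zero]
    have h2 : ∑ l ∈ Finset.range (j+1), P (j+1) l = P (j+1) j := by
      rw [Finset.sum_range_succ]
      have hz : ∑ l ∈ Finset.range j, P (j+1) l = 0 := by
        apply Finset.sum_eq_zero; intro l hl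
        simp [Finset.mem_range] at hl
        exact hbd (j+1) l (by omega)
      rw [hz, zero_add]
    rw [h1, h2, zero_add]
  -- the key identity
  have key : ∀ j, m j * (P j (j+1) * pim j)
      = ∑ k ∈ Finset.range (j+1), (h k - H) * pim k := by
    intro j
    induction j with
    | zero =>
      have hb0 := (hb 0).ne'
      rw [hm.1, Finset.sum_range_one]
      field_simp
      ring
    | succ j ih =>
      have hrec := hm.2 (j+1) (by omega)
      rw [hinner j] at hrec
      rw [hrec, Finset.sum_range_succ, ← ih]
      have db := hdb j
      have hb1 := (hb (j+1)).ne'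
      field_simp
      linear_combination (-(m j)) * db
  intro j
  have hne : P j (j+1) * pim j ≠ 0 := (mul_pos (hb j) (hpimpos j)).ne'
  have first : m j = (1 / (P j (j+1) * pim j)) *
      ∑ k ∈ Finset.range (j+1), (h k - H) * pim k := by
    rw [one_div, inv_mul_eq_div, eq_div_iff hne]
    exact key j
  refine ⟨first, ?_⟩
  -- tail sum
  have hg2 : HasSum (fun k => if j < k then 0 else (h k - H) * pim k)
      (∑ k ∈ Finset.range (j+1), (h k - H) * pim k) := by
    have hz : ∀ k ∉ Finset.range (j+1),
        (if j < k then 0 else (h k - H) * pim k) = 0 := by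
      intro k hk
      simp [Finset.mem_range] at hk
      rw [if_pos (by omega)]
    have hseq : ∑ k ∈ Finset.range (j+1), (if j < k then 0 else (h k - H) * pim k)
        = ∑ k ∈ Finset.range (j+1), (h k - H) * pim k := by
      apply Finset.sum_congr rfl
      intro k hk
      simp [Finset.mem_range] at hk
      rw [if_neg (by omega)]
    have hs : HasSum (fun k => if j < k then 0 else (h k - H) * pim k) _ :=
      hasSum_sum_of_ne_finset_zero hz
    rw [hseq] at hs
    exact hs
  have htail : HasSum (fun k => if j < k then (h k - H) * pim k else 0)
      (-(∑ k ∈ Finset.range (j+1), (h k - H) * pim k)) := by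
    have h3 := hf0.sub hg2
    have heq : (fun k => (h k - H) * pim k - (if j < k then 0 else (h k - H) * pim k))
        = fun k => if j < k then (h k - H) * pim k else 0 := by
      funext k
      by_cases hc : j < k <;> simp [hc]
    rw [heq] at h3
    simpa using h3
  rw [htail.tsum_eq, first]
  ring
end

section
/- Fix 0<ρ<1 and let P be the M/M/1 transition matrix on ℤ⁺: P_{i,j}=a_{i−j+1} for 1≤j≤i+1 where a_k=(ρ/(1+ρ))·(1/(1+ρ))^k, P_{i,0}=(1+ρ)^{−(i+1)}, all other entries 0, with stationary distribution π_i=(1−ρ)ρ^i. Let h:ℤ⁺→ℝ be bounded and set ĥ(j)=h(j)−∑_k h(k)π_k. Then the quantities defined by the single-birth recursion m_0(h)=((1+ρ)/ρ)ĥ(0) and m_i(h)=((1+ρ)/ρ)·(ĥ(i)+(1+ρ)^{−(i+1)}∑_{k=0}^{i−1}(1+ρ)^k m_k(h)) for i≥1 satisfy, for every i≥0, m_i(h) = ((1+ρ)/ρ)·ĥ(i) + ρ^{−(i+1)} ∑_{j=0}^{i−1} ĥ(j)ρ^j = ((1+ρ)/ρ)·ĥ(i) − ρ^{−(i+1)}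 ∑_{j=i}^{∞} ĥ(j)ρ^j. -/
open scoped BigOperators

/-- The M/M/1 queue embedded at arrival times, as a single-birth chain:
`P_{i,j} = a_{i-j+1}` for `1 ≤ j ≤ i+1`, where
`a_k = (ρ/(1+ρ)) (1/(1+ρ))^k`, and `P_{i,0} = (1+ρ)^{-(i+1)}`. -/
noncomputable def mm1 (ρ : ℝ) : ℕ → ℕ → ℝ := fun i j =>
  if j = 0 then (1 / (1 + ρ)) ^ (i + 1)
  else if j ≤ i + 1 then (ρ / (1 + ρ)) * (1 / (1 + ρ)) ^ (i + 1 - j)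
  else 0

/-- **Explicit solution of the M/M/1 recursion.** With
`ĥ(j) = h(j) - ∑_k h(k) π_k` for the stationary distribution
`π_i = (1-ρ) ρ^i`, the quantities defined by
`m_0(h) = ((1+ρ)/ρ) ĥ(0)` and
`m_i(h) = ((1+ρ)/ρ) (ĥ(i) + (1+ρ)^{-(i+1)} ∑_{k<i} (1+ρ)^k m_k(h))` satisfy
`m_i(h) = ((1+ρ)/ρ) ĥ(i) + ρ^{-(i+1)} ∑_{j<i} ĥ(j) ρ^j
        = ((1+ρ)/ρ) ĥ(i) - ρ^{-(i+1)} ∑_{j≥i} ĥ(j) ρ^j`. -/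
theorem mm1_m_formula
    (ρ : ℝ) (hρ0 : 0 < ρ) (hρ1 : ρ < 1)
    (pim : ℕ → ℝ) (hpimdef : ∀ i, pim i = (1 - ρ) * ρ ^ i)
    (h : ℕ → ℝ) (hhbd : ∃ C, ∀ j, |h j| ≤ C)
    (hhat : ℕ → ℝ) (hhatdef : ∀ j, hhat j = h j - ∑' k, h k * pim k)
    (m : ℕ → ℝ)
    (hm0 : m 0 = ((1 + ρ) / ρ) * hhat 0)
    (hmrec : ∀ i, 1 ≤ i →
      m i = ((1 + ρ) / ρ) *
        (hhat i + (1 / (1 + ρ)) ^ (i + 1) *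
          ∑ k ∈ Finset.range i, (1 + ρ) ^ k * m k)) :
    ∀ i : ℕ,
      m i = ((1 + ρ) / ρ) * hhat i +
          (ρ ^ (i + 1))⁻¹ * ∑ j ∈ Finset.range i, hhat j * ρ ^ j ∧
      m i = ((1 + ρ) / ρ) * hhat i -
          (ρ ^ (i + 1))⁻¹ * ∑' j, if i ≤ j then hhat j * ρ ^ j else 0 := by

  have h1ρ : (1:ℝ) + ρ ≠ 0 := by linarith
  have hρne : ρ ≠ 0 := ne_of_gt hρ0
  -- two-term recursion
  have hstep : ∀ i, m (i+1) = m i / ρ + ((1 + ρ) / ρ) * hhat (i+1) - hhat i / ρ := by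
    intro i
    rcases Nat.eq_zero_or_pos i with rfl | hi
    · rw [hmrec 1 le_rfl]
      simp only [Finset.sum_range_one, pow_zero, one_mul, hm0, one_div, inv_pow]
      field_simp
      ring
    · have h1 := hmrec i hi
      have h2 := hmrec (i+1) (by omega)
      rw [Finset.sum_range_succ] at h2
      set S := ∑ k ∈ Finset.range i, (1 + ρ) ^ k * m k with hSdef
      have hA : (1 + ρ) ^ i ≠ 0 := pow_ne_zero _ h1ρ
      have hp1 : ((1:ℝ) / (1 + ρ)) ^ (i + 1) = ((1 + ρ) ^ i * (1 + ρ))⁻¹ := by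
        rw [div_pow, one_pow, pow_succ, one_div]
      have hp2 : ((1:ℝ) / (1 + ρ)) ^ (i + 1 + 1) = ((1 + ρ) ^ i * (1 + ρ) * (1 + ρ))⁻¹ := by
        rw [div_pow, one_pow, pow_succ, pow_succ, one_div]
      rw [hp1] at h1
      rw [hp2] at h2
      have hS : S = (1 + ρ) ^ i * (1 + ρ) * (ρ / (1 + ρ) * m i - hhat i) := by
        have : m i * (ρ / (1 + ρ)) = (hhat i + ((1 + ρ) ^ i * (1 + ρ))⁻¹ * S) := by
          rw [h1]; field_simp
        field_simp at this ⊢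
        linarith [this]
      rw [h2, hS]
      field_simp
      ring
  -- first formula by induction
  have hfst : ∀ i, m i = ((1 + ρ) / ρ) * hhat i +
      (ρ ^ (i + 1))⁻¹ * ∑ j ∈ Finset.range i, hhat j * ρ ^ j := by
    intro i
    induction i with
    | zero => simp [hm0]
    | succ n ih =>
      rw [hstep n, ih, Finset.sum_range_succ, pow_succ, pow_succ]
      have hpn : (ρ:ℝ) ^ n ≠ 0 := pow_ne_zero _ hρne
      field_simp
      ring
  -- summability and vanishing of the full series
  have hgeo : Summable (fun j : ℕ => ρ ^ j) := summable_geometric_of_lt_one (le_of_lt hρ0) hρ1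
  have hsumh : Summable (fun j : ℕ => h j * ρ ^ j) := by
    obtain ⟨C, hC⟩ := hhbd
    apply Summable.of_norm_bounded (hgeo.mul_left C)
    intro j
    rw [norm_mul, Real.norm_eq_abs, Real.norm_eq_abs, abs_of_pos (pow_pos hρ0 j)]
    exact mul_le_mul_of_nonneg_right (hC j) (le_of_lt (pow_pos hρ0 j))
  set A := ∑' j, h j * ρ ^ j with hAdef
  have hmu : (∑' k, h k * pim k) = (1 - ρ) * A := by
    rw [hAdef, ← tsum_mul_left]
    congr 1; funext k; rw [hpimdef k]; ring
  have hg : HasSum (fun j => hhat j * ρ ^ j) 0 := by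
    have h1 : HasSum (fun j => h j * ρ ^ j) A := hsumh.hasSum
    have h2 : HasSum (fun j : ℕ => (1 - ρ) * A * ρ ^ j) ((1 - ρ) * A * (1 - ρ)⁻¹) :=
      (hasSum_geometric_of_lt_one (le_of_lt hρ0) hρ1).mul_left _
    have h3 := h1.sub h2
    have he : (fun j => hhat j * ρ ^ j) =
        (fun j => h j * ρ ^ j - (1 - ρ) * A * ρ ^ j) := by
      funext j; rw [hhatdef j, hmu]; ring
    rw [he]
    convert h3 using 1
    · rfl
    have : (1:ℝ) - ρ ≠ 0 := by linarith
    field_simp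
    ring
  intro i
  have hS : ∀ i : ℕ, HasSum (fun j => if j ∈ Finset.range i then hhat j * ρ ^ j else 0)
      (∑ j ∈ Finset.range i, hhat j * ρ ^ j) := by
    intro i
    have := hasSum_sum_of_ne_finset_zero (L := SummationFilter.unconditional ℕ) (s := Finset.range i)
      (f := fun j => if j ∈ Finset.range i then hhat j * ρ ^ j else 0)
      (by intro b hb; simp [hb])
    convert this using 2
    simp_all
  have htail : HasSum (fun j => if i ≤ j then hhat j * ρ ^ j else 0)
      (0 - ∑ j ∈ Finset.range i, hhat j * ρ ^ j) := by
    have h4 := hg.sub (hS i)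
    convert h4 using 1
    · rfl
    funext j
    by_cases hji : i ≤ j
    · simp [hji, Finset.mem_range, Nat.not_lt.mpr hji]
    · simp [hji, Finset.mem_range, Nat.lt_of_not_le hji]
  refine ⟨hfst i, ?_⟩
  rw [htail.tsum_eq, hfst i]
  ring
end

section
/- Fix 1/2<p<1 and let (Z_t)_{t≥0} be the Markov chain on ℤ⁺ with Z_0=0 and transition matrix P given by P_{0,0}=p, P_{i,i−1}=p for i≥1, P_{i,i+1}=1−p for i≥0, all other entries 0; let π be its stationary distribution π_k=α(1−α)^k with α=(2p−1)/p. Then for every real r with 1 ≤ r ≤ (4p(1−p))^{−1/2} and every t∈ℤ⁺, d_TV(Z_t, π) ≤ ( (2pr + 1 − (1 − 4p(1−p)r²)^{1/2}) / (2r²(2p−1)) ) · r^{−t}. -/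
open scoped BigOperators

/-- The law `μ_t = δ_0 P^t` of the chain at time `t`, started from `Z_0 = 0`:
`μ_0 = δ_0` and `μ_{t+1}(j) = ∑_i μ_t(i) P_{i,j}`. -/
noncomputable def law (P : ℕ → ℕ → ℝ) : ℕ → ℕ → ℝ
  | 0 => fun j => if j = 0 then 1 else 0
  | t + 1 => fun j => ∑' i, law P t i * P i j

/-- The simple random walk on `ℤ⁺` with reflection at the origin:
`P_{0,0} = p`, `P_{i,i-1} = p` for `i ≥ 1`, `P_{i,i+1} = 1 - p`, all other
entries `0`. -/
noncomputable def srw (p : ℝ) : ℕ → ℕ → ℝ := fun i j =>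
  if j = i + 1 then 1 - p
  else if j + 1 = i then p
  else if i = 0 ∧ j = 0 then p
  else 0

set_option maxHeartbeats 1000000

lemma srw_zero' (p : ℝ) {i j : ℕ} (h1 : j ≠ i+1) (h2 : j+1 ≠ i) (h3 : ¬(i=0 ∧ j=0)) :
    srw p i j = 0 := by simp [srw, h1, h2, h3]

lemma law_succ_zero (p : ℝ) (t : ℕ) :
    law (srw p) (t+1) 0 = p * (law (srw p) t 0 + law (srw p) t 1) := by
  show (∑' i, law (srw p) t i * srw p i 0) = _
  rw [tsum_eq_sum (s := {0, 1}) (by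
    intro b hb
    simp only [Finset.mem_insert, Finset.mem_singleton] at hb
    push_neg at hb
    rw [srw_zero' p (by omega) (by omega) (by omega), mul_zero])]
  simp [srw]
  ring

lemma law_succ_succ (p : ℝ) (t j : ℕ) :
    law (srw p) (t+1) (j+1) = (1-p) * law (srw p) t j + p * law (srw p) t (j+2) := by
  show (∑' i, law (srw p) t i * srw p i (j+1)) = _
  rw [tsum_eq_sum (s := {j, j+2}) (by
    intro b hb
    simp only [Finset.mem_insert, Finset.mem_singleton] at hb
    push_neg at hb
    rw [srw_zero' p (by omega) (by omega) (by omega), mul_zero])]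
  rw [Finset.sum_insert (by simp), Finset.sum_singleton]
  simp [srw]
  ring

lemma law_nonneg {p : ℝ} (hp0 : 0 ≤ p) (hp1 : p ≤ 1) : ∀ t j, 0 ≤ law (srw p) t j := by
  intro t
  induction t with
  | zero => intro j; simp only [law]; split <;> norm_num
  | succ t ih =>
    intro j
    have h1p : (0:ℝ) ≤ 1 - p := by linarith
    match j with
    | 0 =>
      rw [law_succ_zero]
      exact mul_nonneg hp0 (add_nonneg (ih 0) (ih 1))
    | j+1 =>
      rw [law_succ_succ]
      exact add_nonneg (mul_nonneg h1p (ih j)) (mul_nonneg hp0 (ih (j+2)))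

lemma law_vanish (p : ℝ) : ∀ t j, t < j → law (srw p) t j = 0 := by
  intro t
  induction t with
  | zero => intro j hj; simp only [law]; rw [if_neg (by omega)]
  | succ t ih =>
    intro j hj
    match j, hj with
    | j+1, hj =>
      rw [law_succ_succ, ih j (by omega), ih (j+2) (by omega)]
      ring

lemma sum_shift (g : ℕ → ℝ) (K : ℕ) :
    ∑ x ∈ Finset.range K, g (x+1) = ∑ x ∈ Finset.range K, g x + g K - g 0 := by
  have h1 := Finset.sum_range_succ g K
  have h2 := Finset.sum_range_succ' g K
  linarith

/-- one-step transfer identity for expectations of `f`. -/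
lemma transfer (p : ℝ) (t : ℕ) (f : ℕ → ℝ) (N : ℕ) (hN : t + 2 ≤ N) :
    ∑ j ∈ Finset.range N, law (srw p) (t+1) j * f j
    = ∑ i ∈ Finset.range N, law (srw p) t i *
        (if i = 0 then p * f 0 + (1-p) * f 1 else p * f (i-1) + (1-p) * f (i+1)) := by
  obtain ⟨K, rfl⟩ : ∃ K, N = K + 2 := ⟨N - 2, by omega⟩
  rw [Finset.sum_range_succ' _ (K+1), Finset.sum_range_succ' _ (K+1)]
  rw [Finset.sum_range_succ' _ K, Finset.sum_range_succ' _ K]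
  have L1 : ∀ x ∈ Finset.range K, law (srw p) (t+1) (x+1+1) * f (x+1+1)
      = (1-p) * (law (srw p) t (x+1) * f (x+2)) + p * (law (srw p) t (x+3) * f (x+2)) := by
    intro x _
    rw [show x+1+1 = (x+1)+1 from rfl, law_succ_succ]
    have : x+1+2 = x+3 := by omega
    rw [this]; ring
  have R1 : ∀ x ∈ Finset.range K, law (srw p) t (x+1+1) *
        (if x+1+1 = 0 then p * f 0 + (1-p) * f 1 else p * f (x+1+1-1) + (1-p) * f (x+1+1+1))
      = p * (law (srw p) t (x+2) * f (x+1)) + (1-p) * (law (srw p) t (x+2) * f (x+3)) := by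
    intro x _
    rw [if_neg (by omega)]
    have : x+1+1-1 = x+1 := by omega
    rw [this, show x+1+1+1 = x+3 from rfl, show x+1+1 = x+2 from rfl]; ring
  rw [Finset.sum_congr rfl L1, Finset.sum_congr rfl R1]
  rw [Finset.sum_add_distrib, Finset.sum_add_distrib, ← Finset.mul_sum, ← Finset.mul_sum,
    ← Finset.mul_sum, ← Finset.mul_sum]
  have S1 : ∑ x ∈ Finset.range K, law (srw p) t (x+2) * f (x+3)
      = ∑ x ∈ Finset.range K, law (srw p) t (x+1) * f (x+2)
        + law (srw p) t (K+1) * f (K+2) - law (srw p) t 1 * f 2 := by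
    have := sum_shift (fun x => law (srw p) t (x+1) * f (x+2)) K
    simpa using this
  have S2 : ∑ x ∈ Finset.range K, law (srw p) t (x+3) * f (x+2)
      = ∑ x ∈ Finset.range K, law (srw p) t (x+2) * f (x+1)
        + law (srw p) t (K+2) * f (K+1) - law (srw p) t 2 * f 1 := by
    have := sum_shift (fun x => law (srw p) t (x+2) * f (x+1)) K
    simpa using this
  have V1 : law (srw p) t (K+1) = 0 := law_vanish p t (K+1) (by omega)
  have V2 : law (srw p) t (K+2) = 0 := law_vanish p t (K+2) (by omega)
  rw [S1, S2, V1, V2]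
  rw [law_succ_zero, show (0:ℕ)+1+1 = 2 from rfl, show (0:ℕ)+1 = 1 from rfl, law_succ_succ]
  rw [if_neg (by omega), if_pos rfl]
  norm_num
  ring

lemma total_mass (p : ℝ) : ∀ t N, t + 1 ≤ N → ∑ j ∈ Finset.range N, law (srw p) t j = 1 := by
  intro t
  induction t with
  | zero =>
    intro N hN
    obtain ⟨K, rfl⟩ : ∃ K, N = K + 1 := ⟨N - 1, by omega⟩
    rw [Finset.sum_range_succ' _ K]
    simp [law]
  | succ t ih =>
    intro N hN
    have := transfer p t (fun _ => 1) N (by omega)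
    simp only [mul_one] at this
    rw [this]
    rw [Finset.sum_congr rfl (fun i _ => by
      show law (srw p) t i * _ = law (srw p) t i
      split <;> ring)]
    exact ih N (by omega)

/-- finite tail sum -/
noncomputable def Tl (p : ℝ) (t j : ℕ) : ℝ :=
  ∑ k ∈ Finset.range (t+1), if j < k then law (srw p) t k else 0

lemma Tl_eq (p : ℝ) (t j N : ℕ) (hN : t + 1 ≤ N) :
    Tl p t j = ∑ k ∈ Finset.range N, if j < k then law (srw p) t k else 0 := by
  apply Finset.sum_subset (Finset.range_subset_range.2 hN)
  intro k _ hk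
  simp only [Finset.mem_range, not_lt] at hk
  rw [law_vanish p t k (by omega)]
  simp

lemma Tl_nonneg {p : ℝ} (hp0 : 0 ≤ p) (hp1 : p ≤ 1) (t j : ℕ) : 0 ≤ Tl p t j := by
  apply Finset.sum_nonneg
  intro k _
  split
  · exact law_nonneg hp0 hp1 t k
  · exact le_refl 0

lemma Tl_succ_zero {p : ℝ} (t : ℕ) :
    Tl p (t+1) 0 = (1-p) + p * Tl p t 1 := by
  rw [Tl_eq p (t+1) 0 (t+3) (by omega)]
  have e : ∀ k ∈ Finset.range (t+3), (if 0 < k then law (srw p) (t+1) k else 0)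
      = law (srw p) (t+1) k * (if 0 < k then 1 else 0) := by
    intro k _; split <;> ring
  rw [Finset.sum_congr rfl e, transfer p t _ (t+3) (by omega)]
  have e2 : ∀ i ∈ Finset.range (t+3), law (srw p) t i *
      (if i = 0 then p * (if (0:ℕ) < 0 then (1:ℝ) else 0) + (1-p) * (if 0 < 1 then 1 else 0)
       else p * (if 0 < i-1 then 1 else 0) + (1-p) * (if 0 < i+1 then 1 else 0))
      = (1-p) * law (srw p) t i + p * (if 1 < i then law (srw p) t i else 0) := by
    intro i _
    rcases Nat.eq_zero_or_pos i with rfl | hi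
    · norm_num; ring
    · have h1 : (0 < i - 1) ↔ (1 < i) := by omega
      have h2 : (0 < i + 1) ↔ True := by simp
      simp only [if_neg (by omega : ¬ i = 0), h1, h2, if_true]
      split_ifs <;> ring
  rw [Finset.sum_congr rfl e2, Finset.sum_add_distrib, ← Finset.mul_sum, ← Finset.mul_sum]
  rw [total_mass p t (t+3) (by omega), ← Tl_eq p t 1 (t+3) (by omega)]
  ring

lemma Tl_succ_succ {p : ℝ} (t j : ℕ) :
    Tl p (t+1) (j+1) = (1-p) * Tl p t j + p * Tl p t (j+2) := by
  rw [Tl_eq p (t+1) (j+1) (t+3) (by omega)]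
  have e : ∀ k ∈ Finset.range (t+3), (if j+1 < k then law (srw p) (t+1) k else 0)
      = law (srw p) (t+1) k * (if j+1 < k then 1 else 0) := by
    intro k _; split <;> ring
  rw [Finset.sum_congr rfl e, transfer p t _ (t+3) (by omega)]
  have e2 : ∀ i ∈ Finset.range (t+3), law (srw p) t i *
      (if i = 0 then p * (if j+1 < 0 then (1:ℝ) else 0) + (1-p) * (if j+1 < 1 then 1 else 0)
       else p * (if j+1 < i-1 then 1 else 0) + (1-p) * (if j+1 < i+1 then 1 else 0))
      = (1-p) * (if j < i then law (srw p) t i else 0)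
        + p * (if j+2 < i then law (srw p) t i else 0) := by
    intro i _
    rcases Nat.eq_zero_or_pos i with rfl | hi
    · norm_num
    · have h1 : (j+1 < i-1) ↔ (j+2 < i) := by omega
      have h2 : (j+1 < i+1) ↔ (j < i) := by omega
      simp only [if_neg (by omega : ¬ i = 0), h1, h2]
      split_ifs <;> ring
  rw [Finset.sum_congr rfl e2, Finset.sum_add_distrib, ← Finset.mul_sum, ← Finset.mul_sum]
  rw [← Tl_eq p t j (t+3) (by omega), ← Tl_eq p t (j+2) (t+3) (by omega)]

lemma Tl_mono {p : ℝ} (hp0 : 0 ≤ p) (hp1 : p ≤ 1) : ∀ t j, Tl p t j ≤ Tl p (t+1) j := by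
  intro t
  induction t with
  | zero =>
    intro j
    have : Tl p 0 j = 0 := by
      rw [Tl]
      apply Finset.sum_eq_zero
      intro k hk
      simp only [Finset.mem_range] at hk
      rw [if_neg (by omega)]
    rw [this]
    exact Tl_nonneg hp0 hp1 1 j
  | succ t ih =>
    intro j
    match j with
    | 0 =>
      rw [Tl_succ_zero, Tl_succ_zero]
      have := ih 1
      nlinarith
    | j+1 =>
      rw [Tl_succ_succ, Tl_succ_succ]
      have h1 := ih j
      have h2 := ih (j+2)
      nlinarith

lemma Tl_zero (p : ℝ) (j : ℕ) : Tl p 0 j = 0 := by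
  apply Finset.sum_eq_zero
  intro k hk
  simp only [Finset.mem_range] at hk
  rw [if_neg (by omega)]

/-- Abel summation. -/
lemma abel_sum (a b : ℕ → ℝ) : ∀ N : ℕ,
    ∑ j ∈ Finset.range N, a j * (∑ l ∈ Finset.range j, b l)
    = ∑ l ∈ Finset.range N, b l * (∑ j ∈ Finset.range N, if l < j then a j else 0) := by
  intro N
  induction N with
  | zero => simp
  | succ N ih =>
    rw [Finset.sum_range_succ, ih]
    have e : ∀ l ∈ Finset.range (N+1),
        b l * (∑ j ∈ Finset.range (N+1), if l < j then a j else 0)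
        = b l * (∑ j ∈ Finset.range N, if l < j then a j else 0)
          + (if l < N then b l * a N else 0) := by
      intro l _
      rw [Finset.sum_range_succ, mul_add]
      congr 1
      split_ifs <;> ring
    rw [Finset.sum_congr rfl e, Finset.sum_add_distrib]
    rw [Finset.sum_range_succ (fun l => b l * (∑ j ∈ Finset.range N, if l < j then a j else 0)) N]
    have z : (∑ j ∈ Finset.range N, if N < j then a j else 0) = 0 := by
      apply Finset.sum_eq_zero
      intro j hj
      simp only [Finset.mem_range] at hj
      rw [if_neg (by omega)]
    rw [z, mul_zero, add_zero]
    have e2 : (∑ l ∈ Finset.range (N+1), if l < N then b l * a N else 0)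
        = ∑ l ∈ Finset.range N, b l * a N := by
      rw [Finset.sum_range_succ, if_neg (by omega), add_zero]
      apply Finset.sum_congr rfl
      intro l hl
      simp only [Finset.mem_range] at hl
      rw [if_pos hl]
    rw [e2, ← Finset.sum_mul]
    ring

/-- the key geometric decay induction for the tail deficit. -/
lemma key_ind {p γ σ r : ℝ} (hp0 : 0 < p) (hp1 : p < 1) (hγ : γ = (1-p)/p)
    (hγσ : γ ≤ σ) (hr : 1 ≤ r) (hq : ((1-p) + p*σ^2) * r = σ) (hpσr : p*σ*r ≤ 1) :
    ∀ t j, (γ^(j+1) - Tl p t j) * r^t ≤ γ * σ^j := by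
  have hγ0 : 0 < γ := by rw [hγ]; apply div_pos <;> linarith
  have hσ0 : 0 < σ := lt_of_lt_of_le hγ0 hγσ
  have hr0 : (0:ℝ) < r := lt_of_lt_of_le one_pos hr
  have hγγ : (1-p) + p*γ^2 = γ := by rw [hγ]; field_simp; ring
  intro t
  induction t with
  | zero =>
    intro j
    rw [Tl_zero, pow_zero, sub_zero, mul_one]
    calc γ^(j+1) = γ * γ^j := by ring
    _ ≤ γ * σ^j := by
        apply mul_le_mul_of_nonneg_left _ hγ0.le
        exact pow_le_pow_left₀ hγ0.le hγσ j
  | succ t ih =>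
    intro j
    match j with
    | 0 =>
      rw [Tl_succ_zero]
      have h2 := ih 1
      have key : (γ^(0+1) - ((1-p) + p * Tl p t 1)) * r^(t+1)
          = p * ((γ^(1+1) - Tl p t 1) * r^t) * r := by
        have : γ - (1-p) = p * γ^2 := by rw [hγ]; field_simp
        calc (γ^(0+1) - ((1-p) + p * Tl p t 1)) * r^(t+1)
            = ((γ - (1-p)) - p * Tl p t 1) * (r^t * r) := by ring
          _ = (p*γ^2 - p * Tl p t 1) * (r^t * r) := by rw [this]
          _ = p * ((γ^(1+1) - Tl p t 1) * r^t) * r := by ring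
      rw [key]
      calc p * ((γ^(1+1) - Tl p t 1) * r^t) * r ≤ p * (γ * σ^1) * r := by
            apply mul_le_mul_of_nonneg_right _ hr0.le
            exact mul_le_mul_of_nonneg_left h2 hp0.le
        _ ≤ γ * σ^0 := by
            have : p * (γ * σ^1) * r = γ * (p*σ*r) := by ring
            rw [this, pow_zero]
            nlinarith
    | j+1 =>
      rw [Tl_succ_succ]
      have hA := ih j
      have hB := ih (j+2)
      have key : (γ^(j+1+1) - ((1-p) * Tl p t j + p * Tl p t (j+2))) * r^(t+1)
          = ((1-p) * ((γ^(j+1) - Tl p t j) * r^t)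
             + p * ((γ^(j+2+1) - Tl p t (j+2)) * r^t)) * r := by
        have hg : γ^(j+2) = (1-p)*γ^(j+1) + p*γ^(j+3) := by
          calc γ^(j+2) = ((1-p) + p*γ^2) * γ^(j+1) := by rw [hγγ]; ring
          _ = (1-p)*γ^(j+1) + p*γ^(j+3) := by ring
        calc (γ^(j+1+1) - ((1-p) * Tl p t j + p * Tl p t (j+2))) * r^(t+1)
            = (γ^(j+2) - ((1-p) * Tl p t j + p * Tl p t (j+2))) * (r^t * r) := by ring
          _ = ((1-p)*γ^(j+1) + p*γ^(j+3) - ((1-p) * Tl p t j + p * Tl p t (j+2))) * (r^t * r) := by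
              rw [hg]
          _ = ((1-p) * ((γ^(j+1) - Tl p t j) * r^t)
             + p * ((γ^(j+2+1) - Tl p t (j+2)) * r^t)) * r := by ring
      rw [key]
      have step1 : (1-p) * ((γ^(j+1) - Tl p t j) * r^t)
             + p * ((γ^(j+2+1) - Tl p t (j+2)) * r^t)
          ≤ (1-p) * (γ * σ^j) + p * (γ * σ^(j+2)) := by
        apply add_le_add
        · exact mul_le_mul_of_nonneg_left hA (by linarith)
        · exact mul_le_mul_of_nonneg_left hB hp0.le
      calc ((1-p) * ((γ^(j+1) - Tl p t j) * r^t)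
             + p * ((γ^(j+2+1) - Tl p t (j+2)) * r^t)) * r
          ≤ ((1-p) * (γ * σ^j) + p * (γ * σ^(j+2))) * r :=
            mul_le_mul_of_nonneg_right step1 hr0.le
        _ = γ * σ^j * (((1-p) + p*σ^2) * r) := by ring
        _ = γ * σ^(j+1) := by rw [hq]; ring

lemma mseq_exists {p : ℝ} (hp : 1/2 < p) (hp1 : p < 1) (h : ℕ → ℝ) (hb : ∀ j, |h j| ≤ 1)
    (cst : ℝ) (hcst : cst = ((2*p-1)/p) * ∑' j, ((1-p)/p)^j * h j) :
    ∃ m : ℕ → ℝ, (∀ l, |m l| ≤ 2/(2*p-1)) ∧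
      (1-p) * m 0 = h 0 - cst ∧ ∀ l, (1-p) * m (l+1) - p * m l = h (l+1) - cst := by
  have hp0 : 0 < p := by linarith
  have hq0 : 0 < 1 - p := by linarith
  have h2p : 0 < 2*p - 1 := by linarith
  set γ : ℝ := (1-p)/p with hγ
  have hγ0 : 0 < γ := div_pos hq0 hp0
  have hγ1 : γ < 1 := by rw [hγ, div_lt_one hp0]; linarith
  have hsgeom : Summable (fun n : ℕ => γ^n) := summable_geometric_of_lt_one hγ0.le hγ1
  have htg : ∑' n : ℕ, γ^n = (1-γ)⁻¹ := tsum_geometric_of_lt_one hγ0.le hγ1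
  have hαγ : (2*p-1)/p = 1 - γ := by rw [hγ]; field_simp; ring
  -- |cst| ≤ 1
  have hsum1 : Summable (fun j : ℕ => γ^j * h j) := by
    apply Summable.of_norm_bounded (g := fun j => γ^j) hsgeom
    intro j
    rw [Real.norm_eq_abs, abs_mul, abs_pow, abs_of_pos hγ0]
    calc γ^j * |h j| ≤ γ^j * 1 :=
          mul_le_mul_of_nonneg_left (hb j) (pow_nonneg hγ0.le j)
      _ = γ^j := mul_one _
  have habs : Summable (fun j : ℕ => |γ^j * h j|) := hsum1.abs
  have hcst1 : |cst| ≤ 1 := by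
    rw [hcst, abs_mul, abs_of_pos (by rw [hαγ]; linarith : (0:ℝ) < (2*p-1)/p)]
    have h1 : |∑' j : ℕ, γ^j * h j| ≤ ∑' j : ℕ, γ^j := by
      calc |∑' j : ℕ, γ^j * h j| ≤ ∑' j : ℕ, |γ^j * h j| := by
            simp only [← Real.norm_eq_abs] at habs ⊢
            exact norm_tsum_le_tsum_norm habs
        _ ≤ ∑' j : ℕ, γ^j := by
            apply Summable.tsum_le_tsum _ habs hsgeom
            intro j
            rw [abs_mul, abs_pow, abs_of_pos hγ0]
            calc γ^j * |h j| ≤ γ^j * 1 := mul_le_mul_of_nonneg_left (hb j) (pow_nonneg hγ0.le j)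
              _ = γ^j := mul_one _
    calc (2*p-1)/p * |∑' j : ℕ, γ^j * h j| ≤ (2*p-1)/p * ∑' j : ℕ, γ^j := by
          apply mul_le_mul_of_nonneg_left h1
          rw [hαγ]; linarith
      _ = 1 := by
          rw [htg, hαγ]
          exact mul_inv_cancel₀ (by linarith)
  set hh : ℕ → ℝ := fun j => h j - cst with hhh
  have hhb : ∀ j, |hh j| ≤ 2 := by
    intro j
    calc |hh j| ≤ |h j| + |cst| := abs_sub _ _
      _ ≤ 2 := by linarith [hb j]
  -- summability of the m-defining series
  have hsm : ∀ l : ℕ, Summable (fun d : ℕ => γ^(d+1) * hh (d + l + 1)) := by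
    intro l
    apply Summable.of_norm_bounded (g := fun d => 2*γ*γ^d) (by
      simpa using hsgeom.mul_left (2*γ))
    intro d
    rw [Real.norm_eq_abs, abs_mul, abs_pow, abs_of_pos hγ0]
    calc γ^(d+1) * |hh (d+l+1)| ≤ γ^(d+1) * 2 := by
          exact mul_le_mul_of_nonneg_left (hhb _) (pow_nonneg hγ0.le _)
      _ = 2*γ*γ^d := by ring
  refine ⟨fun l => -((1-p)⁻¹ * ∑' d : ℕ, γ^(d+1) * hh (d + l + 1)), ?_, ?_, ?_⟩
  · -- bound
    intro l
    rw [abs_neg, abs_mul, abs_of_pos (inv_pos.2 hq0)]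
    have h1 : |∑' d : ℕ, γ^(d+1) * hh (d + l + 1)| ≤ 2*γ*(1-γ)⁻¹ := by
      calc |∑' d : ℕ, γ^(d+1) * hh (d + l + 1)|
          ≤ ∑' d : ℕ, |γ^(d+1) * hh (d + l + 1)| := by
            have habs2 := (hsm l).abs
            simp only [← Real.norm_eq_abs] at habs2 ⊢
            exact norm_tsum_le_tsum_norm habs2
        _ ≤ ∑' d : ℕ, 2*γ*γ^d := by
            apply Summable.tsum_le_tsum _ (hsm l).abs (by simpa using hsgeom.mul_left (2*γ))
            intro d
            rw [abs_mul, abs_pow, abs_of_pos hγ0]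
            calc γ^(d+1) * |hh (d+l+1)| ≤ γ^(d+1) * 2 :=
                  mul_le_mul_of_nonneg_left (hhb _) (pow_nonneg hγ0.le _)
              _ = 2*γ*γ^d := by ring
        _ = 2*γ*(1-γ)⁻¹ := by rw [tsum_mul_left, htg]
    calc (1-p)⁻¹ * |∑' d : ℕ, γ^(d+1) * hh (d + l + 1)| ≤ (1-p)⁻¹ * (2*γ*(1-γ)⁻¹) := by
          exact mul_le_mul_of_nonneg_left h1 (by positivity)
      _ = 2/(2*p-1) := by
          rw [hγ]
          have hpne : p ≠ 0 := ne_of_gt hp0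
          have h2pne : (2*p-1) ≠ 0 := ne_of_gt h2p
          have h1pne : (1-p) ≠ 0 := ne_of_gt hq0
          have hd : 1 - (1-p)/p = (2*p-1)/p := by field_simp; ring
          rw [hd]
          field_simp
  · -- Poisson at 0 ; uses the zero-sum identity
    have hsumhh : Summable (fun i : ℕ => γ^i * hh i) := by
      apply Summable.of_norm_bounded (g := fun d => 2*γ^d) (by simpa using hsgeom.mul_left 2)
      intro d
      rw [Real.norm_eq_abs, abs_mul, abs_pow, abs_of_pos hγ0]
      calc γ^d * |hh d| ≤ γ^d * 2 := mul_le_mul_of_nonneg_left (hhb _) (by positivity)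
        _ = 2*γ^d := by ring
    have hZ : ∑' i : ℕ, γ^i * hh i = 0 := by
      have e : (fun i : ℕ => γ^i * hh i) = fun i => γ^i * h i - cst * γ^i := by
        funext i; simp only [hhh]; ring
      rw [e, Summable.tsum_sub hsum1 (by simpa using hsgeom.mul_left cst), tsum_mul_left, htg, hcst, hαγ]
      have : (1-γ) ≠ 0 := by linarith
      field_simp
      ring
    have hsplit := Summable.tsum_eq_zero_add hsumhh
    rw [hZ] at hsplit
    -- hsplit : 0 = γ^0 * hh 0 + ∑' d, γ^(d+1) * hh (d+1)
    have key : (∑' d : ℕ, γ^(d+1) * hh (d + 0 + 1)) = - hh 0 := by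
      have e : (fun d : ℕ => γ^(d+1) * hh (d + 0 + 1)) = fun d => γ^(d+1) * hh (d+1) := by
        funext d; norm_num
      rw [e]
      simp only [pow_zero, one_mul] at hsplit
      linarith
    show (1-p) * -((1-p)⁻¹ * ∑' d : ℕ, γ^(d+1) * hh (d + 0 + 1)) = hh 0
    rw [key]
    field_simp
  · -- Poisson recursion
    intro l
    have hsplit := Summable.tsum_eq_zero_add (hsm l)
    -- f d = γ^(d+1) * hh (d+l+1) ; f 0 = γ * hh (l+1) ; f (d+1) = γ^(d+2) * hh (d+1+l+1)
    have e : (fun d : ℕ => γ^(d+1+1) * hh (d + 1 + l + 1)) = fun d => γ * (γ^(d+1) * hh (d + (l+1) + 1)) := by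
      funext d
      rw [show d + 1 + l + 1 = d + (l+1) + 1 from by omega]
      ring
    rw [e] at hsplit
    rw [tsum_mul_left] at hsplit
    -- hsplit : ∑' d, γ^(d+1) * hh (d+l+1) = γ^(0+1) * hh (0+l+1) + γ * ∑' d, γ^(d+1) * hh (d+(l+1)+1)
    set A : ℝ := ∑' d : ℕ, γ^(d+1) * hh (d + l + 1) with hA
    set B : ℝ := ∑' d : ℕ, γ^(d+1) * hh (d + (l+1) + 1) with hB
    show (1-p) * -((1-p)⁻¹ * B) - p * -((1-p)⁻¹ * A) = hh (l+1)
    have hsplit' : A = γ * hh (l+1) + γ * B := by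
      rw [hsplit]
      rw [show (0:ℕ) + l + 1 = l + 1 from by omega]
      ring
    rw [hsplit']
    have hne : (1-p) ≠ 0 := ne_of_gt hq0
    field_simp
    rw [hγ]
    field_simp
    ring

section Numeric
variable {p r : ℝ}

lemma four_pqr_le (hp : 1/2 < p) (hp1 : p < 1) (hr1 : 1 ≤ r) (hr2 : r ≤ 1 / Real.sqrt (4*p*(1-p))) : 4*p*(1-p)*r^2 ≤ 1 := by
  have hp0 : 0 < p := by linarith
  have hq0 : 0 < 1-p := by linarith
  have hpq : 0 < 4*p*(1-p) := by positivity
  have hs : 0 < Real.sqrt (4*p*(1-p)) := Real.sqrt_pos.2 hpq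
  have h1 : r * Real.sqrt (4*p*(1-p)) ≤ 1 := by
    rw [← le_div_iff₀ hs]  -- r ≤ 1 / √
    simpa using hr2
  have h2 : (r * Real.sqrt (4*p*(1-p)))^2 ≤ 1 := by
    have hr0 : 0 ≤ r := by linarith
    nlinarith [mul_nonneg hr0 hs.le]
  rw [mul_pow, Real.sq_sqrt hpq.le] at h2
  linarith [h2]

lemma sqrtD_le_one (hp : 1/2 < p) (hp1 : p < 1) (hr1 : 1 ≤ r) (h4 : 4*p*(1-p)*r^2 ≤ 1) :
    Real.sqrt (1 - 4*p*(1-p)*r^2) ≤ 1 := by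
  have hp0 : 0 < p := by linarith
  have hq0 : 0 < 1-p := by linarith
  have : (1 - 4*p*(1-p)*r^2) ≤ 1 := by
    nlinarith [mul_nonneg (by positivity : (0:ℝ) ≤ 4*p*(1-p)) (sq_nonneg r)]
  calc Real.sqrt (1 - 4*p*(1-p)*r^2) ≤ Real.sqrt 1 := Real.sqrt_le_sqrt this
    _ = 1 := Real.sqrt_one

lemma sigma_quad (hp : 1/2 < p) (hp1 : p < 1) (hr1 : 1 ≤ r) (h4 : 4*p*(1-p)*r^2 ≤ 1) :
    ((1-p) + p * ((1 - Real.sqrt (1 - 4*p*(1-p)*r^2))/(2*p*r))^2) * r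
      = (1 - Real.sqrt (1 - 4*p*(1-p)*r^2))/(2*p*r) := by
  have hp0 : 0 < p := by linarith
  have hr0 : 0 < r := by linarith
  have hD0 : 0 ≤ 1 - 4*p*(1-p)*r^2 := by linarith
  have hsq := Real.sq_sqrt hD0
  set s := Real.sqrt (1 - 4*p*(1-p)*r^2) with hs
  have hpne : p ≠ 0 := ne_of_gt hp0
  have hrne : r ≠ 0 := ne_of_gt hr0
  field_simp
  nlinarith [hsq]

lemma gamma_le_sigma (hp : 1/2 < p) (hp1 : p < 1) (hr1 : 1 ≤ r) (h4 : 4*p*(1-p)*r^2 ≤ 1) :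
    (1-p)/p ≤ (1 - Real.sqrt (1 - 4*p*(1-p)*r^2))/(2*p*r) := by
  have hp0 : 0 < p := by linarith
  have hq0 : 0 < 1-p := by linarith
  have hr0 : 0 < r := by linarith
  have hD0 : 0 ≤ 1 - 4*p*(1-p)*r^2 := by linarith
  have h2qr : 2*(1-p)*r ≤ 1 := by nlinarith [sq_nonneg (2*(1-p)*r), mul_pos hq0 hr0]
  have hkey : Real.sqrt (1 - 4*p*(1-p)*r^2) ≤ 1 - 2*(1-p)*r := by
    have hsq : (1 - 4*p*(1-p)*r^2) ≤ (1 - 2*(1-p)*r)^2 := by nlinarith [mul_pos hq0 hr0]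
    calc Real.sqrt (1 - 4*p*(1-p)*r^2) ≤ Real.sqrt ((1 - 2*(1-p)*r)^2) := Real.sqrt_le_sqrt hsq
      _ = 1 - 2*(1-p)*r := by rw [Real.sqrt_sq (by linarith)]
  rw [div_le_div_iff₀ hp0 (by positivity)]
  nlinarith [hkey]

lemma p_sigma_r_le_one (hp : 1/2 < p) (hp1 : p < 1) (hr1 : 1 ≤ r) (h4 : 4*p*(1-p)*r^2 ≤ 1) :
    p * ((1 - Real.sqrt (1 - 4*p*(1-p)*r^2))/(2*p*r)) * r ≤ 1 := by
  have hp0 : 0 < p := by linarith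
  have hr0 : 0 < r := by linarith
  have hD0 : 0 ≤ 1 - 4*p*(1-p)*r^2 := by linarith
  have hs0 : 0 ≤ Real.sqrt (1 - 4*p*(1-p)*r^2) := Real.sqrt_nonneg _
  have : p * ((1 - Real.sqrt (1 - 4*p*(1-p)*r^2))/(2*p*r)) * r
      = (1 - Real.sqrt (1 - 4*p*(1-p)*r^2))/2 := by
    field_simp
  rw [this]
  linarith

lemma final_const (hp : 1/2 < p) (hp1 : p < 1) (hr1 : 1 ≤ r) (h4 : 4*p*(1-p)*r^2 ≤ 1) :
    2/(2*p-1) * p * ((1-p)/p)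
      ≤ (2*p*r + 1 - Real.sqrt (1 - 4*p*(1-p)*r^2)) / (2*r^2*(2*p-1)) := by
  have hp0 : 0 < p := by linarith
  have hq0 : 0 < 1-p := by linarith
  have h2p : 0 < 2*p-1 := by linarith
  have hr0 : 0 < r := by linarith
  have hD0 : 0 ≤ 1 - 4*p*(1-p)*r^2 := by linarith
  have hqr : (1-p)*r ≤ p := by
    by_contra hc
    push_neg at hc
    have h1 : 0 < ((1-p)*r - p) * (4*p*r) :=
      mul_pos (by linarith) (by positivity)
    nlinarith [mul_pos hp0 hr0, sq_nonneg (2*p-1)]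
  have hE0 : 0 ≤ 2*p*r + 1 - 4*(1-p)*r^2 := by nlinarith
  have hkey : Real.sqrt (1 - 4*p*(1-p)*r^2) ≤ 2*p*r + 1 - 4*(1-p)*r^2 := by
    have hsq : 1 - 4*p*(1-p)*r^2 ≤ (2*p*r + 1 - 4*(1-p)*r^2)^2 := by
      nlinarith [mul_nonneg (mul_nonneg hr0.le (by linarith : (0:ℝ) ≤ 1 - 4*p*(1-p)*r^2))
          (by linarith : (0:ℝ) ≤ p - (1-p)*r),
        mul_nonneg (mul_nonneg hr0.le (by linarith : (0:ℝ) ≤ r - 1))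
          (by nlinarith [sq_nonneg (2*p-1)] : (0:ℝ) ≤ 3*p^2 - 3*p + 1),
        mul_nonneg hr0.le (sq_nonneg (2*p-1))]
    calc Real.sqrt (1 - 4*p*(1-p)*r^2) ≤ Real.sqrt ((2*p*r + 1 - 4*(1-p)*r^2)^2) :=
          Real.sqrt_le_sqrt hsq
      _ = 2*p*r + 1 - 4*(1-p)*r^2 := Real.sqrt_sq hE0
  have hlhs : 2/(2*p-1) * p * ((1-p)/p) = (2*(1-p))/(2*p-1) := by field_simp
  rw [hlhs, div_le_div_iff₀ h2p (by positivity)]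
  nlinarith [hkey]

end Numeric

/-- **Rate of convergence for the reflected simple random walk.** For
`1/2 < p < 1`, `Z_0 = 0`, stationary distribution `π_k = α(1-α)^k` with
`α = (2p-1)/p`, and any `1 ≤ r ≤ (4p(1-p))^{-1/2}`,
`d_TV(Z_t, π) ≤ ((2pr + 1 - √(1 - 4p(1-p)r²)) / (2r²(2p-1))) r^{-t}`. -/
theorem srw_convergence_rate
    (p : ℝ) (hp : 1 / 2 < p) (hp1 : p < 1)
    (pim : ℕ → ℝ)
    (hpimdef : ∀ k, pim k = ((2 * p - 1) / p) * (1 - (2 * p - 1) / p) ^ k)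
    (r : ℝ) (hr1 : 1 ≤ r) (hr2 : r ≤ 1 / Real.sqrt (4 * p * (1 - p)))
    (t : ℕ) :
    dTV (law (srw p) t) pim ≤
      ((2 * p * r + 1 - Real.sqrt (1 - 4 * p * (1 - p) * r ^ 2)) /
        (2 * r ^ 2 * (2 * p - 1))) * (r ^ t)⁻¹ := by
  have hp0 : 0 < p := by linarith
  have hq0 : 0 < 1 - p := by linarith
  have h2p : 0 < 2*p - 1 := by linarith
  have hr0 : 0 < r := by linarith
  have hrt : 0 < r^t := by positivity
  have h4 : 4*p*(1-p)*r^2 ≤ 1 := four_pqr_le hp hp1 hr1 (by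
    convert hr2 using 3 <;> ring)
  set γ : ℝ := (1-p)/p with hγ
  have hγ0 : 0 < γ := div_pos hq0 hp0
  have hγ1 : γ < 1 := by rw [hγ, div_lt_one hp0]; linarith
  have hpγ : p * γ = 1 - p := by rw [hγ]; field_simp
  have hpim : ∀ k, pim k = ((2*p-1)/p) * γ^k := by
    intro k
    rw [hpimdef k]
    congr 2
    rw [hγ]
    field_simp
    ring
  -- the sign function
  set μ : ℕ → ℕ → ℝ := law (srw p) with hμ
  set h : ℕ → ℝ := fun j => if pim j ≤ μ t j then 1 else -1 with hhdef
  have hb : ∀ j, |h j| ≤ 1 := by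
    intro j
    rw [hhdef]
    dsimp only
    split_ifs <;> norm_num
  -- summability facts
  have hsgeom : Summable (fun n : ℕ => γ^n) := summable_geometric_of_lt_one hγ0.le hγ1
  have hsum1 : Summable (fun j : ℕ => γ^j * h j) := by
    apply Summable.of_norm_bounded (g := fun j => γ^j) hsgeom
    intro j
    rw [Real.norm_eq_abs, abs_mul, abs_pow, abs_of_pos hγ0]
    calc γ^j * |h j| ≤ γ^j * 1 := mul_le_mul_of_nonneg_left (hb j) (pow_nonneg hγ0.le j)
      _ = γ^j := mul_one _
  have hsum_hpim : Summable (fun j : ℕ => h j * pim j) := by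
    have e : (fun j : ℕ => h j * pim j) = fun j => ((2*p-1)/p) * (γ^j * h j) := by
      funext j; rw [hpim j]; ring
    rw [e]
    exact hsum1.mul_left _
  set cst : ℝ := ∑' j, h j * pim j with hcst
  have hcst_eq : cst = ((2*p-1)/p) * ∑' j : ℕ, γ^j * h j := by
    rw [hcst, ← tsum_mul_left]
    apply tsum_congr
    intro j
    rw [hpim j]
    ring
  obtain ⟨m, hmb, hm0, hmS⟩ := mseq_exists hp hp1 h hb cst hcst_eq
  -- rewrite dTV as a finite sum
  set N := t + 3 with hN
  have hμvanish : ∀ j, t < j → μ t j = 0 := fun j hj => law_vanish p t j hj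
  have hsum_hμ : Summable (fun j : ℕ => h j * μ t j) := by
    apply summable_of_ne_finset_zero (s := Finset.range (t+1))
    intro j hj
    simp only [Finset.mem_range, not_lt] at hj
    rw [hμvanish j (by omega), mul_zero]
  have habs : ∀ j, |μ t j - pim j| = h j * μ t j - h j * pim j := by
    intro j
    rw [hhdef]
    dsimp only
    split_ifs with hc
    · rw [abs_of_nonneg (by linarith)]; ring
    · push_neg at hc
      rw [abs_of_neg (by linarith)]; ring
  have hdtv1 : dTV (μ t) pim = (∑ j ∈ Finset.range N, h j * μ t j) - cst := by
    rw [dTV]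
    rw [tsum_congr habs, Summable.tsum_sub hsum_hμ hsum_hpim, hcst]
    congr 1
    apply tsum_eq_sum
    intro j hj
    simp only [Finset.mem_range, not_lt] at hj
    rw [hμvanish j (by omega), mul_zero]
  have hTM : ∑ j ∈ Finset.range N, μ t j = 1 := total_mass p t N (by omega)
  have hdtv2 : dTV (μ t) pim = ∑ j ∈ Finset.range N, μ t j * (h j - cst) := by
    rw [hdtv1]
    rw [Finset.sum_congr rfl (fun j _ => by ring : ∀ j ∈ Finset.range N,
      μ t j * (h j - cst) = h j * μ t j - cst * μ t j)]
    rw [Finset.sum_sub_distrib, ← Finset.mul_sum, hTM, mul_one]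
  -- Poisson equation
  set g : ℕ → ℝ := fun j => ∑ l ∈ Finset.range j, m l with hg
  have hPg : ∀ j, h j - cst
      = (if j = 0 then p * g 0 + (1-p) * g 1 else p * g (j-1) + (1-p) * g (j+1)) - g j := by
    intro j
    match j with
    | 0 =>
      rw [if_pos rfl]
      have hg0 : g 0 = 0 := by rw [hg]; simp
      have hg1 : g 1 = m 0 := by rw [hg]; simp
      rw [hg0, hg1, ← hm0]
      ring
    | j+1 =>
      rw [if_neg (by omega)]
      have e1 : g (j+1) = g j + m j := Finset.sum_range_succ m j
      have e2 : g (j+2) = g (j+1) + m (j+1) := Finset.sum_range_succ m (j+1)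
      have e3 : j+1-1 = j := by omega
      rw [e3, ← hmS j]
      rw [show j+1+1 = j+2 from rfl, e2, e1]
      ring
  have hdtv3 : dTV (μ t) pim
      = ∑ j ∈ Finset.range N, (μ (t+1) j - μ t j) * g j := by
    rw [hdtv2]
    rw [Finset.sum_congr rfl (fun j _ => by rw [hPg j] : ∀ j ∈ Finset.range N,
      μ t j * (h j - cst) = μ t j *
        ((if j = 0 then p * g 0 + (1-p) * g 1 else p * g (j-1) + (1-p) * g (j+1)) - g j))]
    rw [Finset.sum_congr rfl (fun j _ => mul_sub _ _ _), Finset.sum_sub_distrib]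
    rw [← transfer p t g N (by omega)]
    rw [← Finset.sum_sub_distrib]
    apply Finset.sum_congr rfl
    intro j _
    ring
  -- Abel summation
  set Δ : ℕ → ℝ := fun l => Tl p (t+1) l - Tl p t l with hΔ
  have hΔ_eq : ∀ l, (∑ j ∈ Finset.range N, if l < j then (μ (t+1) j - μ t j) else 0) = Δ l := by
    intro l
    rw [hΔ]
    dsimp only
    rw [Tl_eq p (t+1) l N (by omega), Tl_eq p t l N (by omega)]
    rw [← Finset.sum_sub_distrib]
    apply Finset.sum_congr rfl
    intro j _
    split_ifs <;> ring
  have hΔ0 : ∀ l, 0 ≤ Δ l := by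
    intro l
    rw [hΔ]
    dsimp only
    have := Tl_mono (by linarith : (0:ℝ) ≤ p) (by linarith : p ≤ 1) t l
    linarith
  have hdtv4 : dTV (μ t) pim = ∑ l ∈ Finset.range N, m l * Δ l := by
    rw [hdtv3, abel_sum (fun j => μ (t+1) j - μ t j) m N]
    apply Finset.sum_congr rfl
    intro l _
    rw [hΔ_eq l]
  -- sum of Δ
  have hsumΔ : ∑ l ∈ Finset.range N, Δ l = (1-2*p) + p * μ t 0 := by
    have h1 : ∑ l ∈ Finset.range N, Δ l
        = ∑ j ∈ Finset.range N, (μ (t+1) j - μ t j) * (j:ℝ) := by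
      have h0 := abel_sum (fun j => μ (t+1) j - μ t j) (fun _ => (1:ℝ)) N
      simp only [Finset.sum_const, Finset.card_range, nsmul_eq_mul, mul_one, one_mul] at h0
      rw [Finset.sum_congr rfl (fun l _ => (hΔ_eq l).symm : ∀ l ∈ Finset.range N,
        Δ l = ∑ j ∈ Finset.range N, if l < j then (μ (t+1) j - μ t j) else 0)]
      exact h0.symm
    rw [h1]
    have h2 : ∑ j ∈ Finset.range N, μ (t+1) j * (j:ℝ)
        = ∑ i ∈ Finset.range N, μ t i *
          (if i = 0 then p * ((0:ℕ):ℝ) + (1-p) * ((1:ℕ):ℝ)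
           else p * ((i-1:ℕ):ℝ) + (1-p) * ((i+1:ℕ):ℝ)) :=
      transfer p t (fun i => (i:ℝ)) N (by omega)
    have h3 : ∀ i ∈ Finset.range N, μ t i *
          (if i = 0 then p * ((0:ℕ):ℝ) + (1-p) * ((1:ℕ):ℝ)
           else p * ((i-1:ℕ):ℝ) + (1-p) * ((i+1:ℕ):ℝ))
        = μ t i * (i:ℝ) + ((1-2*p) * μ t i + (if i = 0 then p * μ t i else 0)) := by
      intro i _
      match i with
      | 0 => norm_num; ring
      | i+1 =>
        rw [if_neg (by omega), if_neg (by omega)]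
        have e3 : i+1-1 = i := by omega
        rw [e3]
        push_cast
        ring
    rw [Finset.sum_congr rfl (fun j _ => (sub_mul _ _ _ : (μ (t+1) j - μ t j) * (j:ℝ) = _)),
      Finset.sum_sub_distrib, h2, Finset.sum_congr rfl h3]
    rw [Finset.sum_add_distrib, Finset.sum_add_distrib, ← Finset.mul_sum, hTM]
    rw [Finset.sum_ite_eq' (Finset.range N) 0 (fun i => p * μ t i)]
    rw [if_pos (by simp [hN])]
    ring
  -- bound dTV
  have hμ0 : μ t 0 = 1 - Tl p t 0 := by
    have e : ∀ k ∈ Finset.range (t+1), μ t k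
        = (if 0 < k then μ t k else 0) + (if k = 0 then μ t k else 0) := by
      intro k _
      match k with
      | 0 => norm_num
      | k+1 => rw [if_pos (by omega), if_neg (by omega)]; ring
    have h1 : ∑ k ∈ Finset.range (t+1), μ t k = 1 := total_mass p t (t+1) le_rfl
    rw [Finset.sum_congr rfl e, Finset.sum_add_distrib] at h1
    rw [Finset.sum_ite_eq' (Finset.range (t+1)) 0 (fun k => μ t k), if_pos (by simp)] at h1
    have : Tl p t 0 = ∑ k ∈ Finset.range (t+1), if 0 < k then μ t k else 0 := rfl
    rw [this]
    linarith
  -- the key geometric bound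
  set σ : ℝ := (1 - Real.sqrt (1 - 4*p*(1-p)*r^2))/(2*p*r) with hσ
  have hkey := key_ind hp0 hp1 hγ (gamma_le_sigma hp hp1 hr1 h4) hr1
    (sigma_quad hp hp1 hr1 h4) (p_sigma_r_le_one hp hp1 hr1 h4) t 0
  -- hkey : (γ^1 - Tl p t 0) * r^t ≤ γ * σ^0
  have hkey' : γ - Tl p t 0 ≤ γ * (r^t)⁻¹ := by
    rw [pow_one, pow_zero, mul_one] at hkey
    rw [← le_div_iff₀ hrt] at hkey
    rw [div_eq_mul_inv] at hkey
    exact hkey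
  set S : ℝ := 2/(2*p-1) with hS
  have hS0 : 0 ≤ S := by positivity
  have hbound1 : dTV (μ t) pim ≤ S * ((1-2*p) + p * μ t 0) := by
    rw [hdtv4, ← hsumΔ, Finset.mul_sum]
    apply Finset.sum_le_sum
    intro l _
    exact mul_le_mul_of_nonneg_right (le_trans (le_abs_self _) (hmb l)) (hΔ0 l)
  have hbound2 : (1-2*p) + p * μ t 0 = p * (γ - Tl p t 0) := by
    rw [hμ0]
    have : p * γ = 1 - p := hpγ
    nlinarith [this]
  have hbound3 : dTV (μ t) pim ≤ S * p * (γ * (r^t)⁻¹) := by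
    calc dTV (μ t) pim ≤ S * ((1-2*p) + p * μ t 0) := hbound1
      _ = S * (p * (γ - Tl p t 0)) := by rw [hbound2]
      _ ≤ S * (p * (γ * (r^t)⁻¹)) := by
          apply mul_le_mul_of_nonneg_left _ hS0
          exact mul_le_mul_of_nonneg_left hkey' hp0.le
      _ = S * p * (γ * (r^t)⁻¹) := by ring
  calc dTV (μ t) pim ≤ S * p * (γ * (r^t)⁻¹) := hbound3
    _ = (S * p * γ) * (r^t)⁻¹ := by ring
    _ ≤ ((2 * p * r + 1 - Real.sqrt (1 - 4 * p * (1 - p) * r ^ 2)) /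
        (2 * r ^ 2 * (2 * p - 1))) * (r ^ t)⁻¹ := by
        apply mul_le_mul_of_nonneg_right _ (by positivity)
        have := final_const hp hp1 hr1 h4
        calc S * p * γ = 2/(2*p-1) * p * ((1-p)/p) := by rw [hS, hγ]
          _ ≤ (2*p*r + 1 - Real.sqrt (1 - 4*p*(1-p)*r^2)) / (2*r^2*(2*p-1)) := this
          _ = (2 * p * r + 1 - Real.sqrt (1 - 4 * p * (1 - p) * r ^ 2)) /
              (2 * r ^ 2 * (2 * p - 1)) := by ring_nf
end

section
/- Fix 0<ρ<1 and let (Z_t)_{t≥0} be the Markov chain on ℤ⁺ with Z_0=0 and M/M/1 transition matrix P: P_{i,j}=a_{i−j+1} for 1≤j≤i+1 where a_k=(ρ/(1+ρ))·(1/(1+ρ))^k, P_{i,0}=(1+ρ)^{−(i+1)}, all other entries 0; let π be its stationary distribution π_i=(1−ρ)ρ^i. Then for every real r with 1 ≤ r ≤ (1+ρ)²/(4ρ) and every t∈ℤ⁺, d_TV(Z_t, π) ≤ ( (2−ρ²)·(1+ρ − ((1+ρ)² − 4ρr)^{1/2}) / (2ρ(1−ρ)(1+ρ)r) ) · r^{−t}.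 -/
open scoped BigOperators

/-- `pim` is a stationary distribution for `P`. -/
def IsStationaryDistr (P : ℕ → ℕ → ℝ) (pim : ℕ → ℝ) : Prop :=
  (∀ j, 0 ≤ pim j) ∧ HasSum pim 1 ∧ ∀ j, ∑' i, pim i * P i j = pim j

section MM1Helpers
open Finset

variable {ρ : ℝ}

lemma mm1_nonneg (hρ0 : 0 < ρ) (i j : ℕ) : 0 ≤ mm1 ρ i j := by
  have h1 : (0:ℝ) < 1 + ρ := by linarith
  unfold mm1
  split_ifs <;> positivity

lemma mm1_zero_of_gt {i j : ℕ} (h : i + 1 < j) : mm1 ρ i j = 0 := by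
  unfold mm1
  rw [if_neg (by omega), if_neg (by omega)]

lemma law_zero_of_gt (ρ : ℝ) : ∀ t j, t < j → law (mm1 ρ) t j = 0 := by
  intro t
  induction t with
  | zero =>
    intro j hj
    show (if j = 0 then (1:ℝ) else 0) = 0
    rw [if_neg (by omega)]
  | succ t ih =>
    intro j hj
    show (∑' i, law (mm1 ρ) t i * mm1 ρ i j) = 0
    have h : ∀ i, law (mm1 ρ) t i * mm1 ρ i j = 0 := by
      intro i
      by_cases hi : t < i
      · rw [ih i hi, zero_mul]
      · rw [mm1_zero_of_gt (by omega), mul_zero]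
    simp [h]

lemma law_nonneg_s12 (hρ0 : 0 < ρ) : ∀ t j, 0 ≤ law (mm1 ρ) t j := by
  intro t
  induction t with
  | zero =>
    intro j
    show 0 ≤ (if j = 0 then (1:ℝ) else 0)
    split_ifs <;> norm_num
  | succ t ih =>
    intro j
    show 0 ≤ (∑' i, law (mm1 ρ) t i * mm1 ρ i j)
    exact tsum_nonneg fun i => mul_nonneg (ih i) (mm1_nonneg hρ0 i j)

lemma law_summable (ρ : ℝ) (t : ℕ) : Summable (law (mm1 ρ) t) :=
  summable_of_ne_finset_zero (s := Finset.range (t+1))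
    (fun j hj => law_zero_of_gt ρ t j (by simpa using hj))

lemma law_succ_sum (ρ : ℝ) (t j : ℕ) :
    law (mm1 ρ) (t+1) j = ∑ i ∈ Finset.range (t+1), law (mm1 ρ) t i * mm1 ρ i j := by
  show (∑' i, law (mm1 ρ) t i * mm1 ρ i j) = _
  exact tsum_eq_sum (fun i hi => by
    rw [law_zero_of_gt ρ t i (by simpa using hi), zero_mul])

lemma mm1_col1 (i : ℕ) : mm1 ρ i 1 = ρ * mm1 ρ i 0 := by
  unfold mm1
  rw [if_neg (by omega), if_pos (by omega), if_pos rfl]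
  have h : i + 1 - 1 = i := by omega
  rw [h, pow_succ]
  ring

lemma mm1_step (i k : ℕ) :
    mm1 ρ i (k+1) = (1/(1+ρ)) * mm1 ρ i (k+2) + (ρ/(1+ρ)) * (if i = k then 1 else 0) := by
  unfold mm1
  rw [if_neg (by omega : ¬ (k+1 = 0)), if_neg (by omega : ¬ (k+2 = 0))]
  rcases lt_trichotomy i k with h | h | h
  · rw [if_neg (by omega), if_neg (by omega), if_neg (by omega)]
    ring
  · rw [if_pos (by omega), if_neg (by omega), if_pos h]
    rw [show i + 1 - (k+1) = 0 by omega, pow_zero]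
    ring
  · obtain ⟨d, rfl⟩ : ∃ d, i = k + 1 + d := ⟨i - k - 1, by omega⟩
    rw [if_pos (by omega), if_pos (by omega), if_neg (by omega)]
    rw [show k + 1 + d + 1 - (k+1) = d + 1 by omega,
      show k + 1 + d + 1 - (k+2) = d by omega, pow_succ]
    ring

lemma law_rec (ρ : ℝ) (t k : ℕ) :
    law (mm1 ρ) (t+1) (k+1)
      = (1/(1+ρ)) * law (mm1 ρ) (t+1) (k+2) + (ρ/(1+ρ)) * law (mm1 ρ) t k := by
  rw [law_succ_sum, law_succ_sum]
  have h1 : ∀ i ∈ Finset.range (t+1),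
      law (mm1 ρ) t i * mm1 ρ i (k+1)
        = (1/(1+ρ)) * (law (mm1 ρ) t i * mm1 ρ i (k+2))
          + (ρ/(1+ρ)) * (if i = k then law (mm1 ρ) t i else 0) := by
    intro i _
    rw [mm1_step]
    split_ifs <;> ring
  rw [Finset.sum_congr rfl h1, Finset.sum_add_distrib, ← Finset.mul_sum, ← Finset.mul_sum,
    Finset.sum_ite_eq' (Finset.range (t+1)) k (law (mm1 ρ) t)]
  by_cases hk : k ∈ Finset.range (t+1)
  · rw [if_pos hk]
  · rw [if_neg hk, law_zero_of_gt ρ t k (by simpa using hk), mul_zero]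

lemma law_col1 (ρ : ℝ) (t : ℕ) : law (mm1 ρ) (t+1) 1 = ρ * law (mm1 ρ) (t+1) 0 := by
  rw [law_succ_sum, law_succ_sum, Finset.mul_sum]
  exact Finset.sum_congr rfl fun i _ => by rw [mm1_col1]; ring

end MM1Helpers
section MM1Helpers2
open Finset

lemma mlr (ρ : ℝ) (hρ0 : 0 < ρ) :
    ∀ t j, law (mm1 ρ) t (j+1) ≤ ρ * law (mm1 ρ) t j := by
  intro t
  induction t with
  | zero =>
    intro j
    rw [law_zero_of_gt ρ 0 (j+1) (by omega)]
    exact mul_nonneg hρ0.le (law_nonneg_s12 hρ0 0 j)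
  | succ t ih =>
    have h1 : (0:ℝ) < 1 + ρ := by linarith
    have hβ : (0:ℝ) < 1/(1+ρ) := by positivity
    have hρβ : (0:ℝ) < ρ/(1+ρ) := by positivity
    have key : ∀ d k, t + 2 ≤ k + d →
        law (mm1 ρ) (t+1) (k+2) ≤ ρ * law (mm1 ρ) (t+1) (k+1) := by
      intro d
      induction d with
      | zero =>
        intro k hk
        rw [law_zero_of_gt ρ (t+1) (k+2) (by omega),
          law_zero_of_gt ρ (t+1) (k+1) (by omega), mul_zero]
      | succ d ihd =>
        intro k hk
        have h3 : law (mm1 ρ) (t+1) (k+3) ≤ ρ * law (mm1 ρ) (t+1) (k+2) :=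
          ihd (k+1) (by omega)
        have h4 : law (mm1 ρ) t (k+1) ≤ ρ * law (mm1 ρ) t k := ih k
        have e1 := law_rec ρ t (k+1)
        have e2 := law_rec ρ t k
        have hb : law (mm1 ρ) (t+1) (k+2)
            ≤ (1/(1+ρ)) * (ρ * law (mm1 ρ) (t+1) (k+2))
              + (ρ/(1+ρ)) * (ρ * law (mm1 ρ) t k) := by
          calc law (mm1 ρ) (t+1) (k+2)
              = (1/(1+ρ)) * law (mm1 ρ) (t+1) (k+3) + (ρ/(1+ρ)) * law (mm1 ρ) t (k+1) := e1
            _ ≤ _ := by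
                gcongr
        calc law (mm1 ρ) (t+1) (k+2) ≤ _ := hb
          _ = ρ * ((1/(1+ρ)) * law (mm1 ρ) (t+1) (k+2) + (ρ/(1+ρ)) * law (mm1 ρ) t k) := by
              ring
          _ = ρ * law (mm1 ρ) (t+1) (k+1) := by rw [← e2]
    intro j
    match j with
    | 0 => rw [law_col1]
    | (k+1) => exact key (t+2) k (by omega)

lemma mlr_pow (ρ : ℝ) (hρ0 : 0 < ρ) (t j : ℕ) :
    ∀ n, law (mm1 ρ) t (j + n) ≤ ρ ^ n * law (mm1 ρ) t j := by
  intro n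
  induction n with
  | zero => simp
  | succ n ihn =>
    calc law (mm1 ρ) t (j + (n+1)) = law (mm1 ρ) t ((j + n) + 1) := by ring_nf
      _ ≤ ρ * law (mm1 ρ) t (j + n) := mlr ρ hρ0 t (j+n)
      _ ≤ ρ * (ρ ^ n * law (mm1 ρ) t j) := by
          exact mul_le_mul_of_nonneg_left ihn hρ0.le
      _ = ρ ^ (n+1) * law (mm1 ρ) t j := by ring

end MM1Helpers2
section MM1Helpers3
open Finset

lemma mm1_tail_sum (ρ : ℝ) (hρ0 : 0 < ρ) (i j N : ℕ) (hN : i + 2 ≤ N) :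
    ∑ k ∈ Finset.Ico (j+1) N, mm1 ρ i k
      = if j ≤ i then 1 - (1/(1+ρ))^(i+1-j) else 0 := by
  have h1 : (0:ℝ) < 1 + ρ := by linarith
  by_cases hji : j ≤ i
  · rw [if_pos hji]
    have hsub : Finset.Ico (j+1) (i+2) ⊆ Finset.Ico (j+1) N :=
      Finset.Ico_subset_Ico le_rfl hN
    rw [← Finset.sum_subset hsub (fun x hx hxn => mm1_zero_of_gt (by
      simp only [Finset.mem_Ico] at hx hxn; omega))]
    rw [Finset.sum_Ico_eq_sum_range]
    have hM : i + 2 - (j+1) = i + 1 - j := by omega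
    rw [hM]
    have hterm : ∀ n ∈ Finset.range (i+1-j),
        mm1 ρ i (j+1+n) = (ρ/(1+ρ)) * (1/(1+ρ))^((i+1-j) - 1 - n) := by
      intro n hn
      simp only [Finset.mem_range] at hn
      unfold mm1
      rw [if_neg (by omega), if_pos (by omega),
        show i + 1 - (j+1+n) = (i+1-j) - 1 - n from by omega]
    rw [Finset.sum_congr rfl hterm, ← Finset.mul_sum,
      Finset.sum_range_reflect (fun n => (1/(1+ρ))^n) (i+1-j),
      geom_sum_eq (by
        have : 1/(1+ρ) < 1 := by
          rw [div_lt_one h1]; linarith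
        exact ne_of_lt this)]
    have hne : (1:ℝ)/(1+ρ) - 1 ≠ 0 := by
      have : 1/(1+ρ) < 1 := by rw [div_lt_one h1]; linarith
      intro hc; nlinarith
    have hb : ρ/(1+ρ) + 1/(1+ρ) = 1 := by
      rw [← add_div, div_eq_one_iff_eq h1.ne']; ring
    rw [mul_div_assoc', div_eq_iff hne]
    linear_combination ((1/(1+ρ))^(i+1-j) - 1) * hb
  · rw [if_neg hji]
    exact Finset.sum_eq_zero fun k hk => mm1_zero_of_gt (by
      simp only [Finset.mem_Ico] at hk; omega)

lemma mm1_row_sum (ρ : ℝ) (hρ0 : 0 < ρ) (i : ℕ) :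
    ∑ k ∈ Finset.range (i+2), mm1 ρ i k = 1 := by
  rw [Finset.range_eq_Ico, Finset.sum_eq_sum_Ico_succ_bot (by omega : 0 < i+2)]
  have h0 : (0:ℕ) + 1 = 1 := rfl
  have := mm1_tail_sum ρ hρ0 i 0 (i+2) (by omega)
  rw [h0] at this
  rw [this, if_pos (by omega)]
  have : mm1 ρ i 0 = (1/(1+ρ))^(i+1) := by unfold mm1; rw [if_pos rfl]
  rw [this, show i + 1 - 0 = i + 1 by omega]
  ring

lemma law_sum_one (ρ : ℝ) (hρ0 : 0 < ρ) :
    ∀ t, ∑ j ∈ Finset.range (t+1), law (mm1 ρ) t j = 1 := by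
  intro t
  induction t with
  | zero =>
    rw [Finset.sum_range_one]
    show (if (0:ℕ) = 0 then (1:ℝ) else 0) = 1
    rw [if_pos rfl]
  | succ t ih =>
    have h1 : ∀ j ∈ Finset.range (t+2), law (mm1 ρ) (t+1) j
        = ∑ i ∈ Finset.range (t+1), law (mm1 ρ) t i * mm1 ρ i j :=
      fun j _ => law_succ_sum ρ t j
    rw [Finset.sum_congr rfl h1, Finset.sum_comm]
    have h2 : ∀ i ∈ Finset.range (t+1),
        ∑ j ∈ Finset.range (t+2), law (mm1 ρ) t i * mm1 ρ i j = law (mm1 ρ) t i := by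
      intro i hi
      simp only [Finset.mem_range] at hi
      rw [← Finset.mul_sum]
      have hsub : Finset.range (i+2) ⊆ Finset.range (t+2) := by
        apply Finset.range_subset_range.mpr; omega
      rw [← Finset.sum_subset hsub (fun x hx hxn => mm1_zero_of_gt (by
        simp only [Finset.mem_range] at hx hxn; omega))]
      rw [mm1_row_sum ρ hρ0 i, mul_one]
    rw [Finset.sum_congr rfl h2, ih]

lemma law_tsum_one (ρ : ℝ) (hρ0 : 0 < ρ) (t : ℕ) : ∑' j, law (mm1 ρ) t j = 1 := by
  rw [tsum_eq_sum (s := Finset.range (t+1))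
    (fun j hj => law_zero_of_gt ρ t j (by simpa using hj))]
  exact law_sum_one ρ hρ0 t

end MM1Helpers3
noncomputable def mmT (ρ : ℝ) (t j : ℕ) : ℝ :=
  ∑ k ∈ Finset.Ico (j+1) (t+1), law (mm1 ρ) t k

section MM1Helpers4
open Finset

lemma sum_ite_ge_Ico (a m n : ℕ) (ham : a ≤ m) (f : ℕ → ℝ) :
    ∑ i ∈ Finset.Ico a n, (if m ≤ i then f i else 0) = ∑ i ∈ Finset.Ico m n, f i := by
  rw [← Finset.sum_subset (Finset.Ico_subset_Ico ham le_rfl)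
    (fun x hx hxn => if_neg (by
      simp only [Finset.mem_Ico] at hx hxn; omega))]
  exact Finset.sum_congr rfl fun x hx => if_pos (by
    simp only [Finset.mem_Ico] at hx; omega)

lemma sum_ite_succ_le_Ico (a l n : ℕ) (hln : l ≤ n) (f : ℕ → ℝ) :
    ∑ i ∈ Finset.Ico a n, (if i + 1 ≤ l then f i else 0) = ∑ i ∈ Finset.Ico a l, f i := by
  rw [← Finset.sum_subset (Finset.Ico_subset_Ico le_rfl hln)
    (fun x hx hxn => if_neg (by
      simp only [Finset.mem_Ico] at hx hxn; omega))]
  exact Finset.sum_congr rfl fun x hx => if_pos (by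
    simp only [Finset.mem_Ico] at hx; omega)

lemma coeff_geom (ρ : ℝ) (hρ0 : 0 < ρ) : ∀ M : ℕ,
    (ρ/(1+ρ)) * (1 + ∑ n ∈ Finset.range M, (1/(1+ρ))^(n+1)) = 1 - (1/(1+ρ))^(M+1) := by
  have h1 : (0:ℝ) < 1+ρ := by linarith
  have hb2 : ρ * (1/(1+ρ)) = 1 - 1/(1+ρ) := by field_simp; ring
  intro M
  induction M with
  | zero => simp; field_simp; ring
  | succ M ih =>
    rw [Finset.sum_range_succ,
      show (ρ/(1+ρ)) * (1 + (∑ n ∈ Finset.range M, (1/(1+ρ))^(n+1) + (1/(1+ρ))^(M+1)))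
        = (ρ/(1+ρ)) * (1 + ∑ n ∈ Finset.range M, (1/(1+ρ))^(n+1))
          + (ρ/(1+ρ)) * (1/(1+ρ))^(M+1) from by ring, ih]
    linear_combination ((1/(1+ρ))^(M+1)) * hb2

lemma T_rec (ρ : ℝ) (hρ0 : 0 < ρ) (t j : ℕ) :
    mmT ρ (t+1) j = ∑ i ∈ Finset.range (t+1),
      law (mm1 ρ) t i * (if j ≤ i then 1 - (1/(1+ρ))^(i+1-j) else 0) := by
  unfold mmT
  rw [Finset.sum_congr rfl (fun k _ => law_succ_sum ρ t k), Finset.sum_comm]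
  exact Finset.sum_congr rfl fun i hi => by
    rw [← Finset.mul_sum, mm1_tail_sum ρ hρ0 i j (t+2)
      (by simp only [Finset.mem_range] at hi; omega)]

lemma T_recB (ρ : ℝ) (hρ0 : 0 < ρ) (t k : ℕ) :
    mmT ρ (t+1) (k+1) = (ρ/(1+ρ)) *
      (mmT ρ t k + ∑ i ∈ Finset.Ico (k+1) (t+1), (1/(1+ρ))^(i-k) * mmT ρ t i) := by
  have h1 : (0:ℝ) < 1+ρ := by linarith
  rw [T_rec ρ hρ0 t (k+1)]
  have hL : ∑ i ∈ Finset.range (t+1),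
      law (mm1 ρ) t i * (if k+1 ≤ i then 1 - (1/(1+ρ))^(i+1-(k+1)) else 0)
      = ∑ i ∈ Finset.Ico (k+1) (t+1), law (mm1 ρ) t i * (1 - (1/(1+ρ))^(i-k)) := by
    rw [Finset.range_eq_Ico,
      ← sum_ite_ge_Ico 0 (k+1) (t+1) (by omega)
        (fun i => law (mm1 ρ) t i * (1 - (1/(1+ρ))^(i-k)))]
    exact Finset.sum_congr rfl fun i _ => by
      by_cases h : k+1 ≤ i
      · rw [if_pos h, if_pos h, show i+1-(k+1) = i - k from by omega]
      · rw [if_neg h, if_neg h, mul_zero]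
  rw [hL]
  have hR1 : ∀ i ∈ Finset.Ico (k+1) (t+1),
      (1/(1+ρ))^(i-k) * mmT ρ t i
        = ∑ l ∈ Finset.Ico (k+1) (t+1),
            (if i + 1 ≤ l then (1/(1+ρ))^(i-k) * law (mm1 ρ) t l else 0) := by
    intro i hi
    simp only [Finset.mem_Ico] at hi
    show (1/(1+ρ))^(i-k) * ∑ l ∈ Finset.Ico (i+1) (t+1), law (mm1 ρ) t l = _
    rw [Finset.mul_sum,
      ← sum_ite_ge_Ico (k+1) (i+1) (t+1) (by omega)
        (fun l => (1/(1+ρ))^(i-k) * law (mm1 ρ) t l)]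
  rw [Finset.sum_congr rfl hR1, Finset.sum_comm]
  have hR2 : ∀ l ∈ Finset.Ico (k+1) (t+1),
      ∑ i ∈ Finset.Ico (k+1) (t+1),
          (if i + 1 ≤ l then (1/(1+ρ))^(i-k) * law (mm1 ρ) t l else 0)
        = (∑ n ∈ Finset.range (l-(k+1)), (1/(1+ρ))^(n+1)) * law (mm1 ρ) t l := by
    intro l hl
    simp only [Finset.mem_Ico] at hl
    rw [sum_ite_succ_le_Ico (k+1) l (t+1) (by omega)
      (fun i => (1/(1+ρ))^(i-k) * law (mm1 ρ) t l),
      Finset.sum_Ico_eq_sum_range, ← Finset.sum_mul]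
    congr 1
    exact Finset.sum_congr rfl fun n hn => by
      rw [show k + 1 + n - k = n + 1 from by omega]
  rw [Finset.sum_congr rfl hR2]
  show _ = (ρ/(1+ρ)) * (∑ l ∈ Finset.Ico (k+1) (t+1), law (mm1 ρ) t l + _)
  rw [mul_add, Finset.mul_sum, Finset.mul_sum, ← Finset.sum_add_distrib]
  exact Finset.sum_congr rfl fun l hl => by
    simp only [Finset.mem_Ico] at hl
    have hc := coeff_geom ρ hρ0 (l - (k+1))
    rw [show l - (k+1) + 1 = l - k from by omega] at hc
    calc law (mm1 ρ) t l * (1 - (1/(1+ρ))^(l-k))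
        = ((ρ/(1+ρ)) * (1 + ∑ n ∈ Finset.range (l-(k+1)), (1/(1+ρ))^(n+1)))
            * law (mm1 ρ) t l := by rw [hc]; ring
      _ = _ := by ring

lemma T_recB0 (ρ : ℝ) (hρ0 : 0 < ρ) (t : ℕ) :
    mmT ρ (t+1) 0 = (ρ/(1+ρ)) *
      (1 + ∑ i ∈ Finset.range (t+1), (1/(1+ρ))^(i+1) * mmT ρ t i) := by
  have h1 : (0:ℝ) < 1+ρ := by linarith
  rw [T_rec ρ hρ0 t 0]
  have hL : ∀ i ∈ Finset.range (t+1),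
      law (mm1 ρ) t i * (if 0 ≤ i then 1 - (1/(1+ρ))^(i+1-0) else 0)
        = law (mm1 ρ) t i * (1 - (1/(1+ρ))^(i+1)) := by
    intro i _
    rw [if_pos (Nat.zero_le i), Nat.sub_zero]
  rw [Finset.sum_congr rfl hL]
  have hR1 : ∀ i ∈ Finset.range (t+1),
      (1/(1+ρ))^(i+1) * mmT ρ t i
        = ∑ l ∈ Finset.range (t+1),
            (if i + 1 ≤ l then (1/(1+ρ))^(i+1) * law (mm1 ρ) t l else 0) := by
    intro i hi
    simp only [Finset.mem_range] at hi
    show (1/(1+ρ))^(i+1) * ∑ l ∈ Finset.Ico (i+1) (t+1), law (mm1 ρ) t l = _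
    rw [Finset.mul_sum, Finset.range_eq_Ico,
      ← sum_ite_ge_Ico 0 (i+1) (t+1) (by omega)
        (fun l => (1/(1+ρ))^(i+1) * law (mm1 ρ) t l)]
  rw [Finset.sum_congr rfl hR1, Finset.sum_comm]
  have hR2 : ∀ l ∈ Finset.range (t+1),
      ∑ i ∈ Finset.range (t+1),
          (if i + 1 ≤ l then (1/(1+ρ))^(i+1) * law (mm1 ρ) t l else 0)
        = (∑ n ∈ Finset.range l, (1/(1+ρ))^(n+1)) * law (mm1 ρ) t l := by
    intro l hl
    simp only [Finset.mem_range] at hl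
    rw [Finset.range_eq_Ico,
      sum_ite_succ_le_Ico 0 l (t+1) (by omega)
        (fun i => (1/(1+ρ))^(i+1) * law (mm1 ρ) t l),
      ← Finset.range_eq_Ico, ← Finset.sum_mul]
  rw [Finset.sum_congr rfl hR2]
  have hone := law_sum_one ρ hρ0 t
  have step1 : ∑ l ∈ Finset.range (t+1), law (mm1 ρ) t l * (1 - (1/(1+ρ))^(l+1))
      = ∑ l ∈ Finset.range (t+1), ((ρ/(1+ρ)) * law (mm1 ρ) t l
          + (ρ/(1+ρ)) * ((∑ n ∈ Finset.range l, (1/(1+ρ))^(n+1)) * law (mm1 ρ) t l)) := by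
    refine Finset.sum_congr rfl fun l _ => ?_
    rw [← coeff_geom ρ hρ0 l]
    ring
  rw [step1, Finset.sum_add_distrib, ← Finset.mul_sum, ← Finset.mul_sum, hone, ← mul_add]

end MM1Helpers4
section MM1Bound
open Finset

lemma L_rho (ρ : ℝ) (hρ0 : 0 < ρ) : ∀ M : ℕ,
    ∑ n ∈ Finset.range M, (1/(1+ρ))^(n+1) * ρ^n = 1 - (ρ*(1/(1+ρ)))^M := by
  have h1 : (0:ℝ) < 1+ρ := by linarith
  intro M
  induction M with
  | zero => simp
  | succ M ih =>
    rw [Finset.sum_range_succ, ih]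
    have hb : ρ*(1/(1+ρ)) = 1 - 1/(1+ρ) := by
      rw [mul_one_div, eq_sub_iff_add_eq, ← add_div, div_eq_one_iff_eq h1.ne']; ring
    linear_combination (ρ*(1/(1+ρ)))^M * hb

lemma L_w (ρ w : ℝ) : ∀ M : ℕ,
    (1 - (1/(1+ρ))*w) * ∑ n ∈ Finset.range M, (1/(1+ρ))^(n+1) * w^n
      = (1/(1+ρ)) * (1 - ((1/(1+ρ))*w)^M) := by
  intro M
  induction M with
  | zero => simp
  | succ M ih =>
    rw [Finset.sum_range_succ, mul_add, ih]
    ring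

lemma S_rho (ρ : ℝ) (hρ0 : 0 < ρ) (k d : ℕ) :
    ∑ i ∈ Finset.Ico (k+1) (k+d+1), (1/(1+ρ))^(i-k) * ρ^(i+1)
      = ρ^(k+2) * (1 - (ρ*(1/(1+ρ)))^d) := by
  rw [Finset.sum_Ico_eq_sum_range, show k+d+1-(k+1) = d from by omega]
  rw [show (∑ n ∈ Finset.range d, (1/(1+ρ))^(k+1+n-k) * ρ^(k+1+n+1))
      = ∑ n ∈ Finset.range d, ρ^(k+2) * ((1/(1+ρ))^(n+1) * ρ^n) from
    Finset.sum_congr rfl fun n _ => by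
      rw [show k+1+n-k = n+1 from by omega]; ring]
  rw [← Finset.mul_sum, L_rho ρ hρ0 d]

lemma S_w (ρ w : ℝ) (k d : ℕ) :
    (1 - (1/(1+ρ))*w) * ∑ i ∈ Finset.Ico (k+1) (k+d+1), (1/(1+ρ))^(i-k) * w^i
      = w^(k+1) * ((1/(1+ρ)) * (1 - ((1/(1+ρ))*w)^d)) := by
  rw [Finset.sum_Ico_eq_sum_range, show k+d+1-(k+1) = d from by omega]
  rw [show (∑ n ∈ Finset.range d, (1/(1+ρ))^(k+1+n-k) * w^(k+1+n))
      = ∑ n ∈ Finset.range d, w^(k+1) * ((1/(1+ρ))^(n+1) * w^n) from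
    Finset.sum_congr rfl fun n _ => by
      rw [show k+1+n-k = n+1 from by omega]; ring]
  rw [← Finset.mul_sum, ← mul_assoc, mul_comm (1 - (1/(1+ρ))*w) (w^(k+1)), mul_assoc,
    L_w ρ w d]

lemma key_pow (ρ w r : ℝ) (hρ0 : 0 < ρ) (hr1 : 1 ≤ r) (hρr : ρ*r ≤ w)
    (hρw : ρ ≤ w) (hw0 : 0 < w) (hbw1 : (1/(1+ρ))*w ≤ 1) (t : ℕ) :
    ρ^(t+1) * r^t * (1 - (1/(1+ρ))*w) ≤ (1/(1+ρ)) * w^(t+1) := by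
  have h1 : (0:ℝ) < 1+ρ := by linarith
  have hD0 : 0 ≤ 1 - (1/(1+ρ))*w := by linarith
  have h2 : ρ^(t+1) * r^t ≤ ρ * w^t := by
    have e : ρ^(t+1) * r^t = ρ * (ρ*r)^t := by rw [mul_pow]; ring
    rw [e]
    have := pow_le_pow_left₀ (by positivity : (0:ℝ) ≤ ρ*r) hρr t
    nlinarith [pow_nonneg (by positivity : (0:ℝ) ≤ ρ*r) t]
  have h3 : ρ * (1 - (1/(1+ρ))*w) ≤ (1/(1+ρ)) * w := by
    have hb : (1/(1+ρ)) * (1+ρ) = 1 := by field_simp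
    nlinarith [hρw]
  calc ρ^(t+1) * r^t * (1 - (1/(1+ρ))*w)
      ≤ ρ * w^t * (1 - (1/(1+ρ))*w) := mul_le_mul_of_nonneg_right h2 hD0
    _ = w^t * (ρ * (1 - (1/(1+ρ))*w)) := by ring
    _ ≤ w^t * ((1/(1+ρ)) * w) := mul_le_mul_of_nonneg_left h3 (pow_nonneg hw0.le t)
    _ = (1/(1+ρ)) * w^(t+1) := by rw [pow_succ]; ring

set_option maxHeartbeats 1000000 in
lemma F_bound (ρ r w : ℝ) (hρ0 : 0 < ρ) (hρ1 : ρ < 1) (hr1 : 1 ≤ r)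
    (hw0 : 0 < w) (hw1 : w ≤ 1) (hρw : ρ ≤ w)
    (hroot : ρ * r = w * ((1+ρ) - w)) :
    ∀ t j, (ρ^(j+1) - mmT ρ t j) * r^t ≤ ρ * w^j := by
  have h1 : (0:ℝ) < 1+ρ := by linarith
  have hr0 : (0:ℝ) < r := by linarith
  have hb0 : (0:ℝ) < 1/(1+ρ) := by positivity
  have hb1 : (1:ℝ)/(1+ρ) < 1 := by rw [div_lt_one h1]; linarith
  have hbw1 : (1/(1+ρ))*w ≤ 1 := by nlinarith
  have hD : (0:ℝ) < 1 - (1/(1+ρ))*w := by nlinarith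
  have hone : (1/(1+ρ)) * (1+ρ) = 1 := by field_simp
  have hroot2 : ρ*(1/(1+ρ))*r = w*(1 - (1/(1+ρ))*w) := by
    field_simp
    linear_combination hroot
  have hρr : ρ*r ≤ w := by nlinarith
  intro t
  induction t with
  | zero =>
    intro j
    have h0 : mmT ρ 0 j = 0 := by
      unfold mmT
      rw [Finset.Ico_eq_empty (by omega), Finset.sum_empty]
    rw [h0, pow_zero, sub_zero, mul_one, pow_succ]
    have := pow_le_pow_left₀ hρ0.le hρw j
    nlinarith [pow_nonneg hρ0.le j]
  | succ t ih =>
    intro j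
    by_cases hjt : t + 1 ≤ j
    · have h0 : mmT ρ (t+1) j = 0 := by
        unfold mmT
        rw [Finset.Ico_eq_empty (by omega), Finset.sum_empty]
      rw [h0, sub_zero]
      calc ρ^(j+1) * r^(t+1) = ρ * (ρ^j * r^(t+1)) := by rw [pow_succ]; ring
        _ ≤ ρ * (ρ^j * r^j) := by
            have hrj : r^(t+1) ≤ r^j := pow_le_pow_right₀ hr1 hjt
            have h8 : ρ^j * r^(t+1) ≤ ρ^j * r^j :=
              mul_le_mul_of_nonneg_left hrj (pow_nonneg hρ0.le j)
            nlinarith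
        _ = ρ * (ρ*r)^j := by rw [mul_pow]
        _ ≤ ρ * w^j := by
            have := pow_le_pow_left₀ (by positivity : (0:ℝ) ≤ ρ*r) hρr j
            nlinarith
    · push_neg at hjt
      match j with
      | 0 =>
        rw [T_recB0 ρ hρ0 t]
        set Sw := ∑ i ∈ Finset.range (t+1), (1/(1+ρ))^(i+1) * w^i with hSwdef
        have hsw : (1 - (1/(1+ρ))*w) * Sw = (1/(1+ρ)) * (1 - ((1/(1+ρ))*w)^(t+1)) :=
          L_w ρ w (t+1)
        have hlow : ∀ i ∈ Finset.range (t+1),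
            (1/(1+ρ))^(i+1) * (ρ^(i+1)*r^t - ρ*w^i)
              ≤ (1/(1+ρ))^(i+1) * mmT ρ t i * r^t := by
          intro i _
          have h9 : ρ^(i+1)*r^t - ρ*w^i ≤ mmT ρ t i * r^t := by nlinarith [ih i]
          have := mul_le_mul_of_nonneg_left h9 (by positivity : (0:ℝ) ≤ (1/(1+ρ))^(i+1))
          nlinarith [this]
        have hSle : ∑ i ∈ Finset.range (t+1), (1/(1+ρ))^(i+1) * (ρ^(i+1)*r^t - ρ*w^i)
            ≤ (∑ i ∈ Finset.range (t+1), (1/(1+ρ))^(i+1) * mmT ρ t i) * r^t := by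
          rw [Finset.sum_mul]
          exact Finset.sum_le_sum fun i hi => by
            have := hlow i hi
            nlinarith [this]
        have hs1 : ∑ i ∈ Finset.range (t+1), (1/(1+ρ))^(i+1) * (ρ^(i+1)*r^t - ρ*w^i)
            = r^t * (ρ * (1 - (ρ*(1/(1+ρ)))^(t+1))) - ρ * Sw := by
          have e1 : ∀ i ∈ Finset.range (t+1),
              (1/(1+ρ))^(i+1) * (ρ^(i+1)*r^t - ρ*w^i)
                = r^t * (ρ * ((1/(1+ρ))^(i+1) * ρ^i)) - ρ * ((1/(1+ρ))^(i+1) * w^i) := by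
            intro i _
            rw [pow_succ ρ i]
            ring
          rw [Finset.sum_congr rfl e1, Finset.sum_sub_distrib, ← Finset.mul_sum,
            ← Finset.mul_sum, ← Finset.mul_sum, L_rho ρ hρ0 (t+1), hSwdef]
        have hkey := key_pow ρ w r hρ0 hr1 hρr hρw hw0 hbw1 t
        -- reduce to the explicit bound
        have hsub : (ρ^(0+1) - ρ/(1+ρ) * (1 + ∑ i ∈ Finset.range (t+1),
              (1/(1+ρ))^(i+1) * mmT ρ t i)) * r^(t+1)
            ≤ ρ*r^(t+1) - ρ*(1/(1+ρ))*r*(r^t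
              + (r^t * (ρ * (1 - (ρ*(1/(1+ρ)))^(t+1))) - ρ * Sw)) := by
          have h5 : r^t + (r^t * (ρ * (1 - (ρ*(1/(1+ρ)))^(t+1))) - ρ * Sw)
              ≤ r^t + (∑ i ∈ Finset.range (t+1), (1/(1+ρ))^(i+1) * mmT ρ t i) * r^t := by
            rw [← hs1]
            linarith [hSle]
          have h6 := mul_le_mul_of_nonneg_left h5 (by positivity : (0:ℝ) ≤ ρ*(1/(1+ρ))*r)
          have h7 : (ρ^(0+1) - ρ/(1+ρ) * (1 + ∑ i ∈ Finset.range (t+1),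
                (1/(1+ρ))^(i+1) * mmT ρ t i)) * r^(t+1)
              = ρ*r^(t+1) - ρ*(1/(1+ρ))*r * (r^t
                + (∑ i ∈ Finset.range (t+1), (1/(1+ρ))^(i+1) * mmT ρ t i) * r^t) := by
            rw [pow_succ r t, pow_succ, pow_zero]
            ring
          rw [h7]
          linarith [h6]
        refine le_trans hsub ?_
        rw [pow_zero, mul_one]
        refine le_of_mul_le_mul_right ?_ hD
        have hz0 : (ρ*r^(t+1) - ρ*(1/(1+ρ))*r*(r^t) - ρ*(1/(1+ρ))*r*(r^t*ρ))
            * (1 - (1/(1+ρ))*w) = 0 := by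
          rw [pow_succ]
          linear_combination (-ρ*r^t*r*(1 - (1/(1+ρ))*w)) * hone
        have hclaim2 : ρ*(1/(1+ρ))*r * (r^t * (ρ * (ρ*(1/(1+ρ)))^(t+1))) * (1 - (1/(1+ρ))*w)
            ≤ ρ^2*(1/(1+ρ))^2*r * ((1/(1+ρ))*w)^(t+1) := by
          have hc : (0:ℝ) ≤ ρ^2*(1/(1+ρ))*r*(1/(1+ρ))^(t+1) := by positivity
          have h10 := mul_le_mul_of_nonneg_left hkey hc
          calc ρ*(1/(1+ρ))*r * (r^t * (ρ * (ρ*(1/(1+ρ)))^(t+1))) * (1 - (1/(1+ρ))*w)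
              = (ρ^2*(1/(1+ρ))*r*(1/(1+ρ))^(t+1)) * (ρ^(t+1) * r^t * (1 - (1/(1+ρ))*w)) := by
                rw [mul_pow]; ring
            _ ≤ (ρ^2*(1/(1+ρ))*r*(1/(1+ρ))^(t+1)) * ((1/(1+ρ)) * w^(t+1)) := h10
            _ = ρ^2*(1/(1+ρ))^2*r * ((1/(1+ρ))*w)^(t+1) := by rw [mul_pow]; ring
        have hsw2 : ρ^2*(1/(1+ρ))*r * ((1 - (1/(1+ρ))*w) * Sw)
            = ρ^2*(1/(1+ρ))*r * ((1/(1+ρ)) * (1 - ((1/(1+ρ))*w)^(t+1))) := by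
          rw [hsw]
        have hroot4 : ρ^2*(1/(1+ρ))^2*r = ρ*((1/(1+ρ))*w)*(1 - (1/(1+ρ))*w) := by
          linear_combination (ρ*(1/(1+ρ))) * hroot2
        have hlast : ρ*((1/(1+ρ))*w)*(1 - (1/(1+ρ))*w) ≤ ρ*(1 - (1/(1+ρ))*w) := by
          have hsq : (0:ℝ) ≤ ρ * (1 - (1/(1+ρ))*w)^2 := by positivity
          nlinarith [hsq]
        linarith [hz0, hclaim2, hsw2, hroot4, hlast]
      | (k+1) =>
        rw [T_recB ρ hρ0 t k]
        obtain ⟨d, rfl⟩ : ∃ d, t = k + d := ⟨t - k, by omega⟩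
        set Sw := ∑ i ∈ Finset.Ico (k+1) (k+d+1), (1/(1+ρ))^(i-k) * w^i with hSwdef
        have hsw : (1 - (1/(1+ρ))*w) * Sw
            = w^(k+1) * ((1/(1+ρ)) * (1 - ((1/(1+ρ))*w)^d)) := S_w ρ w k d
        have hlow : ∀ i ∈ Finset.Ico (k+1) (k+d+1),
            (1/(1+ρ))^(i-k) * (ρ^(i+1)*r^(k+d) - ρ*w^i)
              ≤ (1/(1+ρ))^(i-k) * mmT ρ (k+d) i * r^(k+d) := by
          intro i _
          have h9 : ρ^(i+1)*r^(k+d) - ρ*w^i ≤ mmT ρ (k+d) i * r^(k+d) := by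
            nlinarith [ih i]
          have := mul_le_mul_of_nonneg_left h9 (by positivity : (0:ℝ) ≤ (1/(1+ρ))^(i-k))
          nlinarith [this]
        have hSle : ∑ i ∈ Finset.Ico (k+1) (k+d+1), (1/(1+ρ))^(i-k) * (ρ^(i+1)*r^(k+d) - ρ*w^i)
            ≤ (∑ i ∈ Finset.Ico (k+1) (k+d+1), (1/(1+ρ))^(i-k) * mmT ρ (k+d) i) * r^(k+d) := by
          rw [Finset.sum_mul]
          exact Finset.sum_le_sum fun i hi => by
            have := hlow i hi
            nlinarith [this]
        have hs1 : ∑ i ∈ Finset.Ico (k+1) (k+d+1), (1/(1+ρ))^(i-k) * (ρ^(i+1)*r^(k+d) - ρ*w^i)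
            = r^(k+d) * (ρ^(k+2) * (1 - (ρ*(1/(1+ρ)))^d)) - ρ * Sw := by
          have e1 : ∀ i ∈ Finset.Ico (k+1) (k+d+1),
              (1/(1+ρ))^(i-k) * (ρ^(i+1)*r^(k+d) - ρ*w^i)
                = r^(k+d) * ((1/(1+ρ))^(i-k) * ρ^(i+1)) - ρ * ((1/(1+ρ))^(i-k) * w^i) := by
            intro i _
            ring
          rw [Finset.sum_congr rfl e1, Finset.sum_sub_distrib, ← Finset.mul_sum,
            ← Finset.mul_sum, S_rho ρ hρ0 k d, hSwdef]
        have hkey := key_pow ρ w r hρ0 hr1 hρr hρw hw0 hbw1 (k+d)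
        have hsub : (ρ^(k+1+1) - ρ/(1+ρ) * (mmT ρ (k+d) k + ∑ i ∈ Finset.Ico (k+1) (k+d+1),
              (1/(1+ρ))^(i-k) * mmT ρ (k+d) i)) * r^(k+d+1)
            ≤ ρ^(k+2)*r^(k+d+1) - ρ*(1/(1+ρ))*r*((ρ^(k+1)*r^(k+d) - ρ*w^k)
              + (r^(k+d) * (ρ^(k+2) * (1 - (ρ*(1/(1+ρ)))^d)) - ρ * Sw)) := by
          have hTk : ρ^(k+1)*r^(k+d) - ρ*w^k ≤ mmT ρ (k+d) k * r^(k+d) := by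
            nlinarith [ih k]
          have h5 : (ρ^(k+1)*r^(k+d) - ρ*w^k)
                + (r^(k+d) * (ρ^(k+2) * (1 - (ρ*(1/(1+ρ)))^d)) - ρ * Sw)
              ≤ mmT ρ (k+d) k * r^(k+d)
                + (∑ i ∈ Finset.Ico (k+1) (k+d+1), (1/(1+ρ))^(i-k) * mmT ρ (k+d) i)
                  * r^(k+d) := by
            rw [← hs1]
            linarith [hSle, hTk]
          have h6 := mul_le_mul_of_nonneg_left h5 (by positivity : (0:ℝ) ≤ ρ*(1/(1+ρ))*r)
          have h7 : (ρ^(k+1+1) - ρ/(1+ρ) * (mmT ρ (k+d) k + ∑ i ∈ Finset.Ico (k+1) (k+d+1),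
                (1/(1+ρ))^(i-k) * mmT ρ (k+d) i)) * r^(k+d+1)
              = ρ^(k+2)*r^(k+d+1) - ρ*(1/(1+ρ))*r * (mmT ρ (k+d) k * r^(k+d)
                + (∑ i ∈ Finset.Ico (k+1) (k+d+1), (1/(1+ρ))^(i-k) * mmT ρ (k+d) i)
                  * r^(k+d)) := by
            rw [show k+1+1 = k+2 from rfl, pow_succ r (k+d)]
            ring
          rw [h7]
          linarith [h6]
        refine le_trans hsub ?_
        refine le_of_mul_le_mul_right ?_ hD
        have hz0 : (ρ^(k+2)*r^(k+d+1) - ρ*(1/(1+ρ))*r*(ρ^(k+1)*r^(k+d))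
            - ρ*(1/(1+ρ))*r*(r^(k+d)*ρ^(k+2))) * (1 - (1/(1+ρ))*w) = 0 := by
          rw [pow_succ r (k+d)]
          linear_combination (-(ρ^(k+2))*r^(k+d)*r*(1 - (1/(1+ρ))*w)) * hone
        have hclaim2 : ρ*(1/(1+ρ))*r * (r^(k+d) * (ρ^(k+2) * (ρ*(1/(1+ρ)))^d))
              * (1 - (1/(1+ρ))*w)
            ≤ ρ^2*(1/(1+ρ))^2*r * (w^(k+1)*((1/(1+ρ))*w)^d) := by
          have hc : (0:ℝ) ≤ ρ^2*(1/(1+ρ))*r*(1/(1+ρ))^d := by positivity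
          have h10 := mul_le_mul_of_nonneg_left hkey hc
          calc ρ*(1/(1+ρ))*r * (r^(k+d) * (ρ^(k+2) * (ρ*(1/(1+ρ)))^d)) * (1 - (1/(1+ρ))*w)
              = (ρ^2*(1/(1+ρ))*r*(1/(1+ρ))^d) * (ρ^(k+d+1) * r^(k+d) * (1 - (1/(1+ρ))*w)) := by
                rw [mul_pow, show ρ^(k+d+1) = ρ^k*ρ^d*ρ from by
                    rw [pow_add, pow_add, pow_one],
                  show ρ^(k+2) = ρ^k*ρ^2 from by rw [pow_add]]
                ring
            _ ≤ (ρ^2*(1/(1+ρ))*r*(1/(1+ρ))^d) * ((1/(1+ρ)) * w^(k+d+1)) := h10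
            _ = ρ^2*(1/(1+ρ))^2*r * (w^(k+1)*((1/(1+ρ))*w)^d) := by
                rw [mul_pow, show w^(k+d+1) = w^(k+1)*w^d from by
                  rw [← pow_add]; congr 1; omega]
                ring
        have hsw2 : ρ^2*(1/(1+ρ))*r * ((1 - (1/(1+ρ))*w) * Sw)
            = ρ^2*(1/(1+ρ))*r * (w^(k+1) * ((1/(1+ρ)) * (1 - ((1/(1+ρ))*w)^d))) := by
          rw [hsw]
        have hroot3 : ρ*(1/(1+ρ))*r*(ρ*w^k)*(1 - (1/(1+ρ))*w)
            = ρ*w^(k+1)*(1 - (1/(1+ρ))*w)*(1 - (1/(1+ρ))*w) := by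
          rw [pow_succ w k]
          linear_combination (ρ*w^k*(1 - (1/(1+ρ))*w)) * hroot2
        have hroot5 : ρ^2*(1/(1+ρ))^2*r*w^(k+1)
            = ρ*w^(k+1)*((1/(1+ρ))*w)*(1 - (1/(1+ρ))*w) := by
          linear_combination (ρ*(1/(1+ρ))*w^(k+1)) * hroot2
        linarith [hz0, hclaim2, hsw2, hroot3, hroot5]

end MM1Bound
set_option maxHeartbeats 1000000 in
/-- **Rate of convergence for the embedded M/M/1 chain.** For `0 < ρ < 1`,
`Z_0 = 0`, stationary distribution `π_i = (1-ρ)ρ^i`, and any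
`1 ≤ r ≤ (1+ρ)²/(4ρ)`,
`d_TV(Z_t, π) ≤ ((2-ρ²)(1+ρ - √((1+ρ)² - 4ρr)) / (2ρ(1-ρ)(1+ρ)r)) r^{-t}`. -/
theorem mm1_convergence_rate
    (ρ : ℝ) (hρ0 : 0 < ρ) (hρ1 : ρ < 1)
    (pim : ℕ → ℝ) (hpimdef : ∀ i, pim i = (1 - ρ) * ρ ^ i)
    (r : ℝ) (hr1 : 1 ≤ r) (hr2 : r ≤ (1 + ρ) ^ 2 / (4 * ρ))
    (t : ℕ) :
    dTV (law (mm1 ρ) t) pim ≤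
      ((2 - ρ ^ 2) * (1 + ρ - Real.sqrt ((1 + ρ) ^ 2 - 4 * ρ * r)) /
        (2 * ρ * (1 - ρ) * (1 + ρ) * r)) * (r ^ t)⁻¹ := by
  have hpim : pim = fun i => (1 - ρ) * ρ ^ i := funext hpimdef
  subst hpim
  have h1 : (0:ℝ) < 1 + ρ := by linarith
  have hr0 : (0:ℝ) < r := by linarith
  have hrt : (0:ℝ) < r^t := pow_pos hr0 t
  set s := Real.sqrt ((1 + ρ) ^ 2 - 4 * ρ * r) with hsdef
  have harg : 0 ≤ (1+ρ)^2 - 4*ρ*r := by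
    have h4ρ : (0:ℝ) < 4*ρ := by linarith
    have := (le_div_iff₀ h4ρ).mp hr2
    linarith
  have hs0 : 0 ≤ s := Real.sqrt_nonneg _
  have hs2 : s^2 = (1+ρ)^2 - 4*ρ*r := Real.sq_sqrt harg
  have hsle : s ≤ 1 - ρ := by
    have h := Real.sqrt_le_sqrt (by nlinarith : (1+ρ)^2 - 4*ρ*r ≤ (1-ρ)^2)
    rwa [Real.sqrt_sq (by linarith : (0:ℝ) ≤ 1-ρ)] at h
  set w := (1 + ρ - s)/2 with hwdef
  have hρw : ρ ≤ w := by rw [hwdef]; linarith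
  have hw0 : 0 < w := lt_of_lt_of_le hρ0 hρw
  have hw1 : w ≤ 1 := by rw [hwdef]; linarith
  have hroot : ρ*r = w*((1+ρ) - w) := by rw [hwdef]; nlinarith [hs2]
  have hF := F_bound ρ r w hρ0 hρ1 hr1 hw0 hw1 hρw hroot t
  -- the constant inequality 2ρ ≤ C
  have hpoly : 2*ρ*(1-ρ^2) ≤ 2-ρ^2 := by
    rcases le_or_gt ρ (1/2) with h | h
    · nlinarith [sq_nonneg ρ, sq_nonneg (1-ρ)]
    · nlinarith [sq_nonneg ρ, sq_nonneg (1-ρ), mul_nonneg (mul_nonneg hρ0.le hρ0.le)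
        (by linarith : (0:ℝ) ≤ 2*ρ-1)]
  have hden : (0:ℝ) < 2*ρ*(1-ρ)*(1+ρ)*r :=
    mul_pos (mul_pos (mul_pos (by linarith) (by linarith)) h1) hr0
  have hRco : 2*ρ ≤ (2 - ρ^2) * (1 + ρ - s) / (2*ρ*(1-ρ)*(1+ρ)*r) := by
    rw [le_div_iff₀ hden]
    have h2w : 1 + ρ - s = 2*w := by rw [hwdef]; ring
    rw [h2w]
    have hb1' : (1+ρ) - w ≤ 1 := by linarith
    have hA : (0:ℝ) ≤ 2*ρ*(1-ρ^2) := by nlinarith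
    have step1 : 2*ρ*(1-ρ^2)*((1+ρ)-w) ≤ 2-ρ^2 := by nlinarith [hpoly, hA, hb1', hw0]
    have step2 : 2*w*(2*ρ*(1-ρ^2)*((1+ρ)-w)) ≤ 2*w*(2-ρ^2) :=
      mul_le_mul_of_nonneg_left step1 (by linarith)
    calc 2*ρ*(2*ρ*(1-ρ)*(1+ρ)*r) = 2*w*(2*ρ*(1-ρ^2)*((1+ρ)-w)) := by
          linear_combination (4*ρ*(1-ρ^2)) * hroot
      _ ≤ 2*w*(2-ρ^2) := step2
      _ = (2-ρ^2)*(2*w) := by ring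
  -- summability facts
  have hpsum : Summable (law (mm1 ρ) t) := law_summable ρ t
  have hgeom : Summable (fun i : ℕ => ρ^i) := summable_geometric_of_lt_one hρ0.le hρ1
  have hπsum : Summable (fun i : ℕ => (1-ρ)*ρ^i) := hgeom.mul_left _
  have hesum : Summable (fun j => law (mm1 ρ) t j - (1-ρ)*ρ^j) := hpsum.sub hπsum
  have habs : Summable (fun j => |law (mm1 ρ) t j - (1-ρ)*ρ^j|) := hesum.abs
  have hπtsum : ∑' j : ℕ, (1-ρ)*ρ^j = 1 := by
    rw [tsum_mul_left, tsum_geometric_of_lt_one hρ0.le hρ1]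
    exact mul_inv_cancel₀ (by linarith)
  have hptsum := law_tsum_one ρ hρ0 t
  show (∑' j, |law (mm1 ρ) t j - (1-ρ)*ρ^j|) ≤ _
  have hRHS0 : (0:ℝ) ≤ (2 - ρ^2) * (1 + ρ - s) / (2*ρ*(1-ρ)*(1+ρ)*r) * (r^t)⁻¹ := by
    apply mul_nonneg (by linarith) (by positivity)
  by_cases hcase : ∀ j, law (mm1 ρ) t j ≤ (1-ρ)*ρ^j
  · -- equality everywhere
    have h0' : ∑' j, ((1-ρ)*ρ^j - law (mm1 ρ) t j) = 0 := by
      rw [Summable.tsum_sub hπsum hpsum, hptsum, hπtsum]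
      ring
    have hzero : ∀ j, law (mm1 ρ) t j = (1-ρ)*ρ^j := by
      intro j
      by_contra hne
      have hlt : law (mm1 ρ) t j < (1-ρ)*ρ^j := lt_of_le_of_ne (hcase j) hne
      have hle := Summable.le_tsum (hπsum.sub hpsum) j (fun i _ => by linarith [hcase i])
      rw [h0'] at hle
      linarith
    have : (fun j => |law (mm1 ρ) t j - (1-ρ)*ρ^j|) = fun _ => (0:ℝ) :=
      funext fun j => by rw [hzero j, sub_self, abs_zero]
    rw [this, tsum_zero]
    exact hRHS0
  · push_neg at hcase
    obtain ⟨j0, hj0⟩ := hcase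
    have hlawt : ∀ j, t < j → law (mm1 ρ) t j = 0 := law_zero_of_gt ρ t
    have hπpos : ∀ j : ℕ, (0:ℝ) < (1-ρ)*ρ^j := fun j => by
      have := pow_pos hρ0 j; nlinarith
    set S := (Finset.range (t+1)).filter (fun j => (1-ρ)*ρ^j < law (mm1 ρ) t j) with hSdef
    have hj0t : j0 ≤ t := by
      by_contra h
      rw [hlawt j0 (by omega)] at hj0
      linarith [hπpos j0]
    have hS : S.Nonempty :=
      ⟨j0, Finset.mem_filter.mpr ⟨Finset.mem_range.mpr (by omega), hj0⟩⟩
    set m := S.max' hS with hmdef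
    have hmS := S.max'_mem hS
    have hm : (1-ρ)*ρ^m < law (mm1 ρ) t m := (Finset.mem_filter.mp hmS).2
    have hup : ∀ j, m < j → law (mm1 ρ) t j ≤ (1-ρ)*ρ^j := by
      intro j hj
      by_contra h
      push_neg at h
      have hjt : j ≤ t := by
        by_contra hh
        rw [hlawt j (by omega)] at h
        linarith [hπpos j]
      have hjS : j ∈ S := Finset.mem_filter.mpr ⟨Finset.mem_range.mpr (by omega), h⟩
      have := S.le_max' j hjS
      omega
    have hdown : ∀ j, j ≤ m → (1-ρ)*ρ^j ≤ law (mm1 ρ) t j := by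
      intro j hj
      have hn := mlr_pow ρ hρ0 t j (m - j)
      rw [show j + (m-j) = m from by omega] at hn
      have hpowm : ρ^(m-j)*ρ^j = ρ^m := by
        rw [← pow_add]
        congr 1
        omega
      have hπm : (1-ρ)*ρ^m = ρ^(m-j) * ((1-ρ)*ρ^j) := by
        rw [← hpowm]
        ring
      have hpow : (0:ℝ) < ρ^(m-j) := pow_pos hρ0 _
      rw [hπm] at hm
      have := lt_of_lt_of_le hm hn
      exact le_of_lt (lt_of_mul_lt_mul_left this hpow.le)
    -- split the tsum at m+1
    have hsplit := (Summable.sum_add_tsum_nat_add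
      (f := fun j => |law (mm1 ρ) t j - (1-ρ)*ρ^j|) (m+1) habs).symm
    have hesplit := Summable.sum_add_tsum_nat_add
      (f := fun j => law (mm1 ρ) t j - (1-ρ)*ρ^j) (m+1) hesum
    have hesum0 : ∑' j, (law (mm1 ρ) t j - (1-ρ)*ρ^j) = 0 := by
      rw [Summable.tsum_sub hpsum hπsum, hptsum, hπtsum]
      ring
    have hπshift : Summable (fun j : ℕ => (1-ρ)*ρ^(j+(m+1))) :=
      (summable_nat_add_iff (m+1)).mpr hπsum
    have hpshift : Summable (fun j : ℕ => law (mm1 ρ) t (j+(m+1))) :=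
      (summable_nat_add_iff (m+1)).mpr hpsum
    have htailπ : ∑' j : ℕ, (1-ρ)*ρ^(j+(m+1)) = ρ^(m+1) := by
      have e : (fun j : ℕ => (1-ρ)*ρ^(j+(m+1))) = fun j : ℕ => ((1-ρ)*ρ^(m+1))*ρ^j :=
        funext fun j => by rw [pow_add]; ring
      rw [e, tsum_mul_left, tsum_geometric_of_lt_one hρ0.le hρ1]
      rw [show (1-ρ)*ρ^(m+1)*(1-ρ)⁻¹ = ρ^(m+1)*((1-ρ)*(1-ρ)⁻¹) from by ring,
        mul_inv_cancel₀ (by linarith : (1:ℝ)-ρ ≠ 0), mul_one]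
    have htailp : ∑' j : ℕ, law (mm1 ρ) t (j+(m+1)) = mmT ρ t m := by
      rw [tsum_eq_sum (s := Finset.range (t+1))
        (fun j hj => hlawt _ (by simp only [Finset.mem_range] at hj; omega))]
      unfold mmT
      rw [Finset.sum_Ico_eq_sum_range, show t+1-(m+1) = t-m from by omega,
        ← Finset.sum_subset (Finset.range_subset_range.mpr (by omega : t-m ≤ t+1))
          (fun x hx hxn => hlawt _ (by
            simp only [Finset.mem_range] at hx hxn; omega))]
      exact Finset.sum_congr rfl fun j _ => by rw [Nat.add_comm]
    have htaile : ∑' j : ℕ, (law (mm1 ρ) t (j+(m+1)) - (1-ρ)*ρ^(j+(m+1)))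
        = mmT ρ t m - ρ^(m+1) := by
      rw [Summable.tsum_sub hpshift hπshift, htailp, htailπ]
    have hhead : ∑ j ∈ Finset.range (m+1), (law (mm1 ρ) t j - (1-ρ)*ρ^j)
        = ρ^(m+1) - mmT ρ t m := by
      have := hesplit
      rw [htaile, hesum0] at this
      linarith
    have habs1 : ∑ j ∈ Finset.range (m+1), |law (mm1 ρ) t j - (1-ρ)*ρ^j|
        = ∑ j ∈ Finset.range (m+1), (law (mm1 ρ) t j - (1-ρ)*ρ^j) :=
      Finset.sum_congr rfl fun j hj => abs_of_nonneg (by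
        simp only [Finset.mem_range] at hj
        linarith [hdown j (by omega)])
    have habs2 : ∑' j : ℕ, |law (mm1 ρ) t (j+(m+1)) - (1-ρ)*ρ^(j+(m+1))|
        = ∑' j : ℕ, ((1-ρ)*ρ^(j+(m+1)) - law (mm1 ρ) t (j+(m+1))) := by
      refine tsum_congr fun j => ?_
      rw [abs_of_nonpos (by linarith [hup (j+(m+1)) (by omega)])]
      ring
    have habs2' : ∑' j : ℕ, ((1-ρ)*ρ^(j+(m+1)) - law (mm1 ρ) t (j+(m+1)))
        = ρ^(m+1) - mmT ρ t m := by
      rw [Summable.tsum_sub hπshift hpshift, htailp, htailπ]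
    have hdtv : (∑' j, |law (mm1 ρ) t j - (1-ρ)*ρ^j|)
        = 2*(ρ^(m+1) - mmT ρ t m) := by
      rw [hsplit, habs1, hhead, habs2, habs2']
      ring
    rw [hdtv]
    have hFm := hF m
    have hwm : w^m ≤ 1 := pow_le_one₀ hw0.le hw1
    have hwm' : ρ*w^m ≤ ρ := by
      have := mul_le_mul_of_nonneg_left hwm hρ0.le
      linarith [this]
    have h2 : (ρ^(m+1) - mmT ρ t m) * r^t ≤ ρ := le_trans hFm hwm'
    rw [← div_eq_mul_inv, le_div_iff₀ hrt]
    calc 2*(ρ^(m+1) - mmT ρ t m) * r^t = 2*((ρ^(m+1) - mmT ρ t m) * r^t) := by ring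
      _ ≤ 2*ρ := by linarith [h2]
      _ ≤ (2 - ρ^2) * (1 + ρ - s) / (2*ρ*(1-ρ)*(1+ρ)*r) := hRco
end
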